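/- arXiv:1507.01784 — 3 statements merged into one kernel-verified Lean document; each statement's English description precedes it below -/
import Mathlib

section
/- Under the DICA model, the matrix S := Cov(x,x) − diag(E(x)) has the diagonal structure S = Σ_{k=1}^K Var(α_k) d_k d_kᵀ = D diag(Var(α_1), …, Var(α_K)) Dᵀ. -/
open MeasureTheory ProbabilityTheory Real
open scoped ENNReal NNReal

section Aux
variable {ι : Type*} [Fintype ι] {α : ι → Type*} [∀ i, MeasurableSpace (α i)]

lemma map_eval_pi' (μ : ∀ i, Measure (α i)) [∀ i, IsProbabilityMeasure (μ i)] (i : ι) :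
    (Measure.pi μ).map (fun x => x i) = μ i := by
  classical
  ext s hs
  rw [Measure.map_apply (measurable_pi_apply i) hs]
  have h1 : (fun x : ∀ i, α i => x i) ⁻¹' s
      = Set.pi Set.univ (Function.update (fun i => Set.univ) i s) := Set.eval_preimage
  rw [h1, Measure.pi_pi]
  rw [Fintype.prod_eq_single i (fun m hm => by simp [Function.update_of_ne hm])]
  simp

lemma map_pair_pi' (μ : ∀ i, Measure (α i)) [∀ i, IsProbabilityMeasure (μ i)] {i j : ι}
    (hij : i ≠ j) :
    (Measure.pi μ).map (fun x => (x i, x j)) = (μ i).prod (μ j) := by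
  classical
  refine ((μ i).prod_eq fun s t hs ht => ?_).symm
  rw [Measure.map_apply ((measurable_pi_apply i).prodMk (measurable_pi_apply j)) (hs.prod ht)]
  have h1 : (fun x : ∀ i, α i => (x i, x j)) ⁻¹' (s ×ˢ t)
      = Set.pi Set.univ (Function.update (Function.update (fun _ => Set.univ) i s) j t) := by
    ext x
    simp only [Set.mem_preimage, Set.mem_prod, Set.mem_pi, Set.mem_univ, true_implies]
    constructor
    · rintro ⟨h1, h2⟩ m
      rcases eq_or_ne m j with rfl | hmj
      · simp [Function.update_self, h2]
      rcases eq_or_ne m i with rfl | hmi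
      · simp [Function.update_of_ne hmj, Function.update_self, h1]
      · simp [Function.update_of_ne hmj, Function.update_of_ne hmi]
    · intro h
      refine ⟨?_, ?_⟩
      · have := h i
        simpa [Function.update_of_ne hij, Function.update_self] using this
      · have := h j
        simpa [Function.update_self] using this
  rw [h1, Measure.pi_pi]
  rw [Fintype.prod_eq_mul i j hij (fun m hm => by
    simp [Function.update_of_ne hm.2, Function.update_of_ne hm.1])]
  simp [Function.update_of_ne hij]
end Aux

lemma measurable_map_mk {A N : Type*} [MeasurableSpace A] [MeasurableSpace N] [Countable N]
    [MeasurableSingletonClass N] (ρ : A → Measure N) (h : ∀ n : N, Measurable fun a => ρ a {n}) :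
    Measurable fun a => (ρ a).map (fun n => (a, n)) := by
  apply Measure.measurable_of_measurable_coe
  intro s hs
  have key : ∀ a, (ρ a).map (fun n => (a, n)) s
      = ∑' n : N, ((fun a' => (a', n)) ⁻¹' s).indicator (fun _ => ρ a {n}) a := by
    intro a
    rw [Measure.map_apply measurable_prodMk_left hs,
      ← Measure.tsum_indicator_apply_singleton (ρ a) _ (measurable_prodMk_left hs)]
    apply tsum_congr
    intro n
    by_cases hmem : (a, n) ∈ s <;> simp [Set.indicator, hmem]
  simp_rw [key]
  exact Measurable.ennreal_tsum fun n =>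
    Measurable.indicator (h n) (measurable_prodMk_right hs)

lemma pi_measure_singleton {ι : Type*} [Fintype ι] {α : ι → Type*} [∀ i, MeasurableSpace (α i)]
    [∀ i, MeasurableSingletonClass (α i)] (μ : ∀ i, Measure (α i)) [∀ i, SigmaFinite (μ i)]
    (n : ∀ i, α i) :
    Measure.pi μ {n} = ∏ i, μ i {n i} := by
  rw [show ({n} : Set (∀ i, α i)) = Set.pi Set.univ (fun i => {n i}) from
    (Set.univ_pi_singleton n).symm, Measure.pi_pi]

lemma measurable_poisson_singleton {A : Type*} [MeasurableSpace A] (R : A → ℝ≥0)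
    (hR : Measurable R) (k : ℕ) :
    Measurable fun a => poissonMeasure (R a) {k} := by
  simp_rw [show ∀ a, poissonMeasure (R a) {k} = ENNReal.ofReal (poissonPMFReal (R a) k) from
    fun a => ProbabilityTheory.poissonMeasure_singleton (R a) k]
  apply Measurable.ennreal_ofReal
  have hc : Continuous fun r : ℝ≥0 => poissonPMFReal r k := by
    unfold poissonPMFReal
    fun_prop
  exact hc.measurable.comp hR

lemma pois_hasSum_one (r : ℝ≥0) : HasSum (fun n => poissonPMFReal r n) 1 :=
  poissonPMFRealSum r

lemma pois_shift1 (r : ℝ≥0) (n : ℕ) :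
    ((n + 1 : ℕ) : ℝ) * poissonPMFReal r (n + 1) = r * poissonPMFReal r n := by
  unfold poissonPMFReal
  rw [Nat.factorial_succ]
  push_cast
  have h : ((n : ℝ) + 1) ≠ 0 := by positivity
  field_simp
  ring

lemma pois_hasSum_mean (r : ℝ≥0) :
    HasSum (fun n : ℕ => (n : ℝ) * poissonPMFReal r n) r := by
  have h := (pois_hasSum_one r).mul_left (r : ℝ)
  rw [mul_one] at h
  have h2 : HasSum (fun n : ℕ => ((n + 1 : ℕ) : ℝ) * poissonPMFReal r (n + 1)) r := by
    simpa only [pois_shift1] using h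
  refine (hasSum_nat_add_iff' (f := fun n : ℕ => (n : ℝ) * poissonPMFReal r n) 1).mp ?_
  simpa [Finset.sum_range_one] using h2

lemma pois_shift2 (r : ℝ≥0) (n : ℕ) :
    ((n + 2 : ℕ) : ℝ) * ((n + 1 : ℕ) : ℝ) * poissonPMFReal r (n + 2)
      = (r : ℝ) ^ 2 * poissonPMFReal r n := by
  unfold poissonPMFReal
  rw [show n + 2 = (n + 1) + 1 by ring, Nat.factorial_succ, Nat.factorial_succ]
  push_cast
  have h1 : ((n : ℝ) + 1) ≠ 0 := by positivity
  have h2 : ((n : ℝ) + 1 + 1) ≠ 0 := by positivity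
  field_simp
  ring

lemma pois_hasSum_fac2 (r : ℝ≥0) :
    HasSum (fun n : ℕ => (n : ℝ) * ((n : ℝ) - 1) * poissonPMFReal r n) ((r : ℝ) ^ 2) := by
  have h := (pois_hasSum_one r).mul_left ((r : ℝ) ^ 2)
  rw [mul_one] at h
  have h2 : HasSum (fun n : ℕ =>
      ((n + 2 : ℕ) : ℝ) * (((n + 2 : ℕ) : ℝ) - 1) * poissonPMFReal r (n + 2)) ((r:ℝ)^2) := by
    have : ∀ n : ℕ, ((n + 2 : ℕ) : ℝ) * (((n + 2 : ℕ) : ℝ) - 1) * poissonPMFReal r (n + 2)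
        = (r : ℝ) ^ 2 * poissonPMFReal r n := by
      intro n
      rw [← pois_shift2 r n]
      push_cast
      ring
    simpa only [this] using h
  refine (hasSum_nat_add_iff' (f := fun n : ℕ => (n : ℝ) * ((n:ℝ) - 1) * poissonPMFReal r n) 2).mp ?_
  simpa [Finset.sum_range_succ] using h2

lemma pois_hasSum_sq (r : ℝ≥0) :
    HasSum (fun n : ℕ => (n : ℝ) ^ 2 * poissonPMFReal r n) ((r : ℝ) ^ 2 + r) := by
  have h := (pois_hasSum_fac2 r).add (pois_hasSum_mean r)
  have : (fun n : ℕ => (n : ℝ) * ((n:ℝ) - 1) * poissonPMFReal r n + (n:ℝ) * poissonPMFReal r n)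
      = fun n : ℕ => (n : ℝ) ^ 2 * poissonPMFReal r n := by
    funext n; ring
  rwa [this] at h

lemma poissonMeasure_singleton (r : ℝ≥0) (n : ℕ) :
    poissonMeasure r {n} = ENNReal.ofReal (poissonPMFReal r n) :=
  ProbabilityTheory.poissonMeasure_singleton r n

lemma pois_lint (r : ℝ≥0) (g : ℕ → ℝ) (hg : ∀ n, 0 ≤ g n) {s : ℝ}
    (hs : HasSum (fun n => g n * poissonPMFReal r n) s) :
    ∫⁻ n, ENNReal.ofReal (g n) ∂poissonMeasure r = ENNReal.ofReal s := by
  rw [lintegral_countable']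
  have : ∀ n : ℕ, ENNReal.ofReal (g n) * poissonMeasure r {n}
      = ENNReal.ofReal (g n * poissonPMFReal r n) := by
    intro n
    rw [_root_.poissonMeasure_singleton, ← ENNReal.ofReal_mul (hg n)]
  simp_rw [this]
  rw [← ENNReal.ofReal_tsum_of_nonneg (fun n => mul_nonneg (hg n) poissonPMFReal_nonneg)
    hs.summable, hs.tsum_eq]

lemma pois_lint_mean (r : ℝ≥0) :
    ∫⁻ n, (n : ℝ≥0∞) ∂poissonMeasure r = r := by
  have h := pois_lint r (fun n => (n : ℝ)) (fun n => Nat.cast_nonneg n) (pois_hasSum_mean r)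
  simp only [ENNReal.ofReal_natCast] at h
  rw [h, ENNReal.ofReal_coe_nnreal]

lemma pois_lint_sq (r : ℝ≥0) :
    ∫⁻ n, (n : ℝ≥0∞) ^ 2 ∂poissonMeasure r = (r : ℝ≥0∞) ^ 2 + r := by
  have h := pois_lint r (fun n => (n : ℝ) ^ 2) (fun n => by positivity) (pois_hasSum_sq r)
  have e : ∀ n : ℕ, ENNReal.ofReal ((n : ℝ) ^ 2) = (n : ℝ≥0∞) ^ 2 := by
    intro n
    rw [ENNReal.ofReal_pow (Nat.cast_nonneg n), ENNReal.ofReal_natCast]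
  simp_rw [e] at h
  rw [h, ENNReal.ofReal_add (by positivity) r.coe_nonneg, ENNReal.ofReal_pow r.coe_nonneg]
  simp

section DICA

variable {M K : ℕ} (D : Matrix (Fin M) (Fin K) ℝ)

/-- intensity vector -/
noncomputable def dicaY (a : Fin K → ℝ) (m : Fin M) : ℝ := ∑ k, D m k * a k

noncomputable def dicaR (a : Fin K → ℝ) (m : Fin M) : ℝ≥0 := (dicaY D a m).toNNReal

noncomputable def dicaPois (a : Fin K → ℝ) : Measure (Fin M → ℕ) :=
  Measure.pi fun m => poissonMeasure (dicaR D a m)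

noncomputable def dicaKer (a : Fin K → ℝ) : Measure ((Fin K → ℝ) × (Fin M → ℕ)) :=
  (dicaPois D a).map fun n => (a, n)

instance (a : Fin K → ℝ) : IsProbabilityMeasure (dicaPois D a) := by
  unfold dicaPois; infer_instance

instance (a : Fin K → ℝ) : IsProbabilityMeasure (dicaKer D a) :=
  Measure.isProbabilityMeasure_map measurable_prodMk_left.aemeasurable

lemma dicaY_measurable (m : Fin M) : Measurable fun a => dicaY D a m :=
  Finset.measurable_sum _ fun k _ => (measurable_pi_apply k).const_mul _

lemma dicaR_measurable (m : Fin M) : Measurable fun a => dicaR D a m :=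
  (dicaY_measurable D m).real_toNNReal

lemma dicaKer_measurable : Measurable (dicaKer D) := by
  apply measurable_map_mk
  intro n
  have : ∀ a, dicaPois D a {n} = ∏ m, poissonMeasure (dicaR D a m) {n m} := fun a =>
    pi_measure_singleton _ n
  simp_rw [this]
  exact Finset.measurable_prod _ fun m _ =>
    measurable_poisson_singleton _ (dicaR_measurable D m) (n m)

lemma dica_lintegral_bind (ν : Fin K → Measure ℝ)
    {f : (Fin K → ℝ) × (Fin M → ℕ) → ℝ≥0∞} (hf : Measurable f) :
    ∫⁻ ω, f ω ∂((Measure.pi ν).bind (dicaKer D))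
      = ∫⁻ a, ∫⁻ n, f (a, n) ∂dicaPois D a ∂Measure.pi ν := by
  rw [Measure.lintegral_bind (dicaKer_measurable D).aemeasurable hf.aemeasurable]
  refine lintegral_congr fun a => ?_
  rw [dicaKer, lintegral_map hf measurable_prodMk_left]

lemma dica_pois_mean (a : Fin K → ℝ) (i : Fin M) :
    ∫⁻ n, ((n i : ℕ) : ℝ≥0∞) ∂dicaPois D a = (dicaR D a i : ℝ≥0∞) := by
  have h : ∫⁻ n, ((n i : ℕ) : ℝ≥0∞) ∂dicaPois D a
      = ∫⁻ x : ℕ, (x : ℝ≥0∞) ∂((dicaPois D a).map fun n => n i) :=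
    (lintegral_map (f := fun x : ℕ => (x : ℝ≥0∞)) measurable_from_nat
      (measurable_pi_apply i)).symm
  rw [h, dicaPois, map_eval_pi', pois_lint_mean]

lemma dica_pois_sq (a : Fin K → ℝ) (i : Fin M) :
    ∫⁻ n, ((n i : ℕ) : ℝ≥0∞) * ((n i : ℕ) : ℝ≥0∞) ∂dicaPois D a
      = (dicaR D a i : ℝ≥0∞) * (dicaR D a i : ℝ≥0∞) + (dicaR D a i : ℝ≥0∞) := by
  have h : ∫⁻ n, ((n i : ℕ) : ℝ≥0∞) * ((n i : ℕ) : ℝ≥0∞) ∂dicaPois D a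
      = ∫⁻ x : ℕ, (x : ℝ≥0∞) * (x : ℝ≥0∞) ∂((dicaPois D a).map fun n => n i) :=
    (lintegral_map (f := fun x : ℕ => (x : ℝ≥0∞) * (x : ℝ≥0∞)) measurable_from_nat
      (measurable_pi_apply i)).symm
  have h2 := pois_lint_sq (dicaR D a i)
  rw [h, dicaPois, map_eval_pi']
  simpa [pow_two] using h2

lemma dica_pois_mul (a : Fin K → ℝ) {i j : Fin M} (hij : i ≠ j) :
    ∫⁻ n, ((n i : ℕ) : ℝ≥0∞) * ((n j : ℕ) : ℝ≥0∞) ∂dicaPois D a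
      = (dicaR D a i : ℝ≥0∞) * (dicaR D a j : ℝ≥0∞) := by
  have h : ∫⁻ n, ((n i : ℕ) : ℝ≥0∞) * ((n j : ℕ) : ℝ≥0∞) ∂dicaPois D a
      = ∫⁻ p : ℕ × ℕ, (p.1 : ℝ≥0∞) * (p.2 : ℝ≥0∞)
          ∂((dicaPois D a).map fun n => (n i, n j)) :=
    (lintegral_map (f := fun p : ℕ × ℕ => (p.1 : ℝ≥0∞) * (p.2 : ℝ≥0∞))
      (g := fun n : Fin M → ℕ => (n i, n j))
      (measurable_of_countable _)
      ((measurable_pi_apply i).prodMk (measurable_pi_apply j))).symm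
  rw [h, dicaPois, map_pair_pi' _ hij,
    lintegral_prod_mul measurable_from_nat.aemeasurable measurable_from_nat.aemeasurable,
    pois_lint_mean, pois_lint_mean]

end DICA

/-- Under the DICA model (topics `d_k` = columns of `D` in the simplex,
mutually independent nonnegative intensities `α_k` with law `ν k`, and, conditionally on `α`,
independent coordinates `x_m ~ Poisson([Dα]_m)`), the matrix
`S := Cov(x,x) − diag(E x)` has the diagonal structure
`S = ∑ₖ Var(α_k) d_k d_kᵀ = D diag(Var α) Dᵀ`. -/
theorem dica_S_diagonal_structure
    (M K : ℕ) (hM : 1 ≤ M) (hK : 1 ≤ K)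
    (D : Matrix (Fin M) (Fin K) ℝ)
    (hDnonneg : ∀ m k, 0 ≤ D m k) (hDsum : ∀ k, ∑ m, D m k = 1)
    (ν : Fin K → Measure ℝ) [∀ k, IsProbabilityMeasure (ν k)]
    (hνnonneg : ∀ k, ∀ᵐ t ∂(ν k), 0 ≤ t)
    (hν2 : ∀ k, MemLp (fun t : ℝ => t) 2 (ν k))
    (P : Measure ((Fin K → ℝ) × (Fin M → ℕ)))
    (hP : P = (Measure.pi ν).bind (fun a =>
      (Measure.pi fun m : Fin M => poissonMeasure (∑ k, D m k * a k).toNNReal).map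
        (fun n => (a, n)))) :
    ∀ i j : Fin M,
      (∫ ω, ((ω.2 i : ℝ) - ∫ ω', (ω'.2 i : ℝ) ∂P) * ((ω.2 j : ℝ) - ∫ ω', (ω'.2 j : ℝ) ∂P) ∂P)
          - (if i = j then ∫ ω, (ω.2 i : ℝ) ∂P else 0)
        = ∑ k, variance (fun t : ℝ => t) (ν k) * D i k * D j k := by
  classical
  intro i j
  have hPd : P = (Measure.pi ν).bind (dicaKer D) := hP
  clear hP
  -- ## probability measure
  haveI hPprob : IsProbabilityMeasure P := by
    constructor
    rw [hPd, Measure.bind_apply MeasurableSet.univ (dicaKer_measurable D).aemeasurable]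
    simp [measure_univ]
  -- ## a.e. nonnegativity
  have haeA : ∀ᵐ a ∂(Measure.pi ν), ∀ k, 0 ≤ a k := by
    rw [ae_all_iff]
    intro k
    have h0 : ν k {t : ℝ | ¬ 0 ≤ t} = 0 := by
      have := hνnonneg k
      rwa [ae_iff] at this
    have := Measure.pi_eval_preimage_null (μ := ν) (i := k) h0
    rw [ae_iff]
    exact this
  have hynn : ∀ᵐ a ∂(Measure.pi ν), ∀ m : Fin M, 0 ≤ dicaY D a m :=
    haeA.mono fun a ha m => Finset.sum_nonneg fun k _ => mul_nonneg (hDnonneg m k) (ha k)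
  have hcoe : ∀ (a : Fin K → ℝ) (m : Fin M),
      (dicaR D a m : ℝ≥0∞) = ENNReal.ofReal (dicaY D a m) := fun a m => rfl
  -- ## ν-side moments
  have hIk1 : ∀ k, Integrable (fun t : ℝ => t) (ν k) := fun k => MemLp.integrable one_le_two (hν2 k)
  have hIk2 : ∀ k, Integrable (fun t : ℝ => t * t) (ν k) := fun k => by
    simpa [pow_two] using (hν2 k).integrable_sq
  have hIak : ∀ k, Integrable (fun a : Fin K → ℝ => a k) (Measure.pi ν) := by
    intro k
    have h := hIk1 k
    rw [← map_eval_pi' ν k] at h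
    exact (integrable_map_measure aestronglyMeasurable_id
      (measurable_pi_apply k).aemeasurable).mp h
  have hEak : ∀ k, ∫ a, a k ∂(Measure.pi ν) = ∫ t, t ∂ν k := by
    intro k
    have h := integral_map (μ := Measure.pi ν) (φ := fun a : Fin K → ℝ => a k)
      (measurable_pi_apply k).aemeasurable (f := fun t : ℝ => t) aestronglyMeasurable_id
    rw [map_eval_pi' ν k] at h
    exact h.symm
  have hIakl : ∀ k l : Fin K, Integrable (fun a : Fin K → ℝ => a k * a l) (Measure.pi ν) := by
    intro k l
    rcases eq_or_ne k l with rfl | hkl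
    · have h := hIk2 k
      rw [← map_eval_pi' ν k] at h
      exact (integrable_map_measure (measurable_id.mul measurable_id).aestronglyMeasurable
        (measurable_pi_apply k).aemeasurable).mp h
    · have h := (hIk1 k).mul_prod (hIk1 l)
      rw [← map_pair_pi' ν hkl] at h
      exact (integrable_map_measure (measurable_fst.mul measurable_snd).aestronglyMeasurable
        ((measurable_pi_apply k).prodMk (measurable_pi_apply l)).aemeasurable).mp h
  have hEakl : ∀ k l : Fin K, ∫ a, a k * a l ∂(Measure.pi ν)
      = if k = l then ∫ t, t * t ∂ν k else (∫ t, t ∂ν k) * ∫ t, t ∂ν l := by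
    intro k l
    rcases eq_or_ne k l with rfl | hkl
    · rw [if_pos rfl]
      have h := integral_map (μ := Measure.pi ν) (φ := fun a : Fin K → ℝ => a k)
        (measurable_pi_apply k).aemeasurable (f := fun t : ℝ => t * t)
        (measurable_id.mul measurable_id).aestronglyMeasurable
      rw [map_eval_pi' ν k] at h
      exact h.symm
    · rw [if_neg hkl]
      have h := integral_map (μ := Measure.pi ν) (φ := fun a : Fin K → ℝ => (a k, a l))
        ((measurable_pi_apply k).prodMk (measurable_pi_apply l)).aemeasurable
        (f := fun p : ℝ × ℝ => p.1 * p.2)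
        (measurable_fst.mul measurable_snd).aestronglyMeasurable
      rw [map_pair_pi' ν hkl] at h
      rw [← h, integral_prod_mul (f := fun t : ℝ => t) (g := fun t : ℝ => t)]
  -- ## y-side moments
  have hIy : ∀ m, Integrable (fun a => dicaY D a m) (Measure.pi ν) := by
    intro m
    have : Integrable (fun a : Fin K → ℝ => ∑ k, D m k * a k) (Measure.pi ν) :=
      integrable_finset_sum _ fun k _ => (hIak k).const_mul _
    exact this
  have hEy : ∀ m, ∫ a, dicaY D a m ∂(Measure.pi ν) = ∑ k, D m k * ∫ t, t ∂ν k := by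
    intro m
    show ∫ a, ∑ k, D m k * a k ∂(Measure.pi ν) = _
    rw [integral_finset_sum _ fun k _ => (hIak k).const_mul _]
    exact Finset.sum_congr rfl fun k _ => by rw [integral_const_mul, hEak k]
  have hEynn : ∀ m, 0 ≤ ∫ a, dicaY D a m ∂(Measure.pi ν) := fun m =>
    integral_nonneg_of_ae (hynn.mono fun a h => h m)
  have hyyeq : ∀ i' j' : Fin M, (fun a => dicaY D a i' * dicaY D a j')
      = fun a : Fin K → ℝ => ∑ k, ∑ l, D i' k * D j' l * (a k * a l) := by
    intro i' j'
    funext a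
    show (∑ k, D i' k * a k) * (∑ l, D j' l * a l) = _
    rw [Finset.sum_mul_sum]
    exact Finset.sum_congr rfl fun k _ => Finset.sum_congr rfl fun l _ => by ring
  have hIyy : ∀ i' j' : Fin M,
      Integrable (fun a => dicaY D a i' * dicaY D a j') (Measure.pi ν) := by
    intro i' j'
    rw [hyyeq]
    exact integrable_finset_sum _ fun k _ =>
      integrable_finset_sum _ fun l _ => (hIakl k l).const_mul _
  have hEyynn : ∀ i' j' : Fin M, 0 ≤ ∫ a, dicaY D a i' * dicaY D a j' ∂(Measure.pi ν) :=
    fun i' j' => integral_nonneg_of_ae (hynn.mono fun a h => mul_nonneg (h i') (h j'))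
  have hEyy : ∀ i' j' : Fin M, ∫ a, dicaY D a i' * dicaY D a j' ∂(Measure.pi ν)
      = ∑ k, ∑ l, D i' k * D j' l * ∫ a, a k * a l ∂(Measure.pi ν) := by
    intro i' j'
    rw [hyyeq]
    rw [integral_finset_sum _ fun k _ =>
      integrable_finset_sum _ fun l _ => (hIakl k l).const_mul _]
    refine Finset.sum_congr rfl fun k _ => ?_
    rw [integral_finset_sum _ fun l _ => (hIakl k l).const_mul _]
    exact Finset.sum_congr rfl fun l _ => integral_const_mul _ _
  -- ## key algebraic identity
  have hkey : ∫ a, dicaY D a i * dicaY D a j ∂(Measure.pi ν)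
        - (∫ a, dicaY D a i ∂(Measure.pi ν)) * ∫ a, dicaY D a j ∂(Measure.pi ν)
      = ∑ k, ((∫ t, t * t ∂ν k) - (∫ t, t ∂ν k) ^ 2) * D i k * D j k := by
    rw [hEyy, hEy, hEy, Finset.sum_mul_sum, ← Finset.sum_sub_distrib]
    refine Finset.sum_congr rfl fun k _ => ?_
    rw [← Finset.sum_sub_distrib]
    rw [Finset.sum_eq_single_of_mem k (Finset.mem_univ k) ?_]
    · rw [hEakl k k, if_pos rfl]
      ring
    · intro l _ hlk
      rw [hEakl k l, if_neg (fun h => hlk h.symm)]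
      ring
  -- ## P-side first moments
  have hxmeas : ∀ m : Fin M, Measurable fun ω : (Fin K → ℝ) × (Fin M → ℕ) => (ω.2 m : ℝ) :=
    fun m => measurable_from_nat.comp ((measurable_pi_apply m).comp measurable_snd)
  have hL1 : ∀ m : Fin M, ∫⁻ ω, ((ω.2 m : ℕ) : ℝ≥0∞) ∂P
      = ENNReal.ofReal (∫ a, dicaY D a m ∂(Measure.pi ν)) := by
    intro m
    rw [hPd, dica_lintegral_bind D ν
      (f := fun ω : (Fin K → ℝ) × (Fin M → ℕ) => ((ω.2 m : ℕ) : ℝ≥0∞))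
      (measurable_from_nat.comp ((measurable_pi_apply m).comp measurable_snd))]
    have h1 : ∀ a, ∫⁻ n, ((n m : ℕ) : ℝ≥0∞) ∂dicaPois D a = ENNReal.ofReal (dicaY D a m) :=
      fun a => (dica_pois_mean D a m).trans (hcoe a m)
    simp_rw [h1]
    rw [← ofReal_integral_eq_lintegral_ofReal (hIy m) (hynn.mono fun a h => h m)]
  have hL2 : ∫⁻ ω, ((ω.2 i : ℕ) : ℝ≥0∞) * ((ω.2 j : ℕ) : ℝ≥0∞) ∂P
      = ENNReal.ofReal (∫ a, dicaY D a i * dicaY D a j ∂(Measure.pi ν))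
        + (if i = j then ENNReal.ofReal (∫ a, dicaY D a i ∂(Measure.pi ν)) else 0) := by
    rw [hPd, dica_lintegral_bind D ν
      (f := fun ω : (Fin K → ℝ) × (Fin M → ℕ) => ((ω.2 i : ℕ) : ℝ≥0∞) * ((ω.2 j : ℕ) : ℝ≥0∞))
      ((measurable_from_nat.comp ((measurable_pi_apply i).comp measurable_snd)).fun_mul
        (measurable_from_nat.comp ((measurable_pi_apply j).comp measurable_snd)))]
    rcases eq_or_ne i j with rfl | hij
    · rw [if_pos rfl]
      have h1 : ∀ᵐ a ∂(Measure.pi ν),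
          ∫⁻ n, ((n i : ℕ) : ℝ≥0∞) * ((n i : ℕ) : ℝ≥0∞) ∂dicaPois D a
            = ENNReal.ofReal (dicaY D a i * dicaY D a i) + ENNReal.ofReal (dicaY D a i) := by
        filter_upwards [hynn] with a ha
        rw [dica_pois_sq, hcoe, ← ENNReal.ofReal_mul (ha i)]
      rw [lintegral_congr_ae h1,
        lintegral_add_right _ ((dicaY_measurable D i).ennreal_ofReal),
        ← ofReal_integral_eq_lintegral_ofReal (hIyy i i)
          (hynn.mono fun a h => mul_nonneg (h i) (h i)),
        ← ofReal_integral_eq_lintegral_ofReal (hIy i) (hynn.mono fun a h => h i)]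
    · rw [if_neg hij, add_zero]
      have h1 : ∀ᵐ a ∂(Measure.pi ν),
          ∫⁻ n, ((n i : ℕ) : ℝ≥0∞) * ((n j : ℕ) : ℝ≥0∞) ∂dicaPois D a
            = ENNReal.ofReal (dicaY D a i * dicaY D a j) := by
        filter_upwards [hynn] with a ha
        rw [dica_pois_mul D a hij, hcoe, hcoe, ← ENNReal.ofReal_mul (ha i)]
      rw [lintegral_congr_ae h1,
        ← ofReal_integral_eq_lintegral_ofReal (hIyy i j)
          (hynn.mono fun a h => mul_nonneg (h i) (h j))]
  -- ## integrability over P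
  have hIX : ∀ m : Fin M, Integrable (fun ω : (Fin K → ℝ) × (Fin M → ℕ) => (ω.2 m : ℝ)) P := by
    intro m
    refine ⟨(hxmeas m).aestronglyMeasurable, ?_⟩
    rw [hasFiniteIntegral_iff_ofReal (Filter.Eventually.of_forall fun ω => Nat.cast_nonneg _)]
    have : ∫⁻ ω, ENNReal.ofReal ((ω.2 m : ℕ) : ℝ) ∂P = ∫⁻ ω, ((ω.2 m : ℕ) : ℝ≥0∞) ∂P := by
      simp_rw [ENNReal.ofReal_natCast]
    rw [this, hL1 m]
    exact ENNReal.ofReal_lt_top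
  have hIXY : Integrable (fun ω : (Fin K → ℝ) × (Fin M → ℕ) => (ω.2 i : ℝ) * (ω.2 j : ℝ)) P := by
    refine ⟨((hxmeas i).mul (hxmeas j)).aestronglyMeasurable, ?_⟩
    rw [hasFiniteIntegral_iff_ofReal (Filter.Eventually.of_forall fun ω =>
      mul_nonneg (Nat.cast_nonneg _) (Nat.cast_nonneg _))]
    have : ∫⁻ ω, ENNReal.ofReal ((ω.2 i : ℝ) * (ω.2 j : ℝ)) ∂P
        = ∫⁻ ω, ((ω.2 i : ℕ) : ℝ≥0∞) * ((ω.2 j : ℕ) : ℝ≥0∞) ∂P := by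
      simp_rw [ENNReal.ofReal_mul (Nat.cast_nonneg _), ENNReal.ofReal_natCast]
    rw [this, hL2]
    refine ENNReal.add_lt_top.mpr ⟨ENNReal.ofReal_lt_top, ?_⟩
    split_ifs
    · exact ENNReal.ofReal_lt_top
    · exact ENNReal.zero_lt_top
  -- ## expectations over P
  have hEX : ∀ m : Fin M, ∫ ω, (ω.2 m : ℝ) ∂P = ∫ a, dicaY D a m ∂(Measure.pi ν) := by
    intro m
    rw [integral_eq_lintegral_of_nonneg_ae (Filter.Eventually.of_forall fun ω => Nat.cast_nonneg _)
      (hxmeas m).aestronglyMeasurable]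
    have : ∫⁻ ω, ENNReal.ofReal ((ω.2 m : ℕ) : ℝ) ∂P = ∫⁻ ω, ((ω.2 m : ℕ) : ℝ≥0∞) ∂P := by
      simp_rw [ENNReal.ofReal_natCast]
    rw [this, hL1 m, ENNReal.toReal_ofReal (hEynn m)]
  have hEXY : ∫ ω, (ω.2 i : ℝ) * (ω.2 j : ℝ) ∂P
      = ∫ a, dicaY D a i * dicaY D a j ∂(Measure.pi ν)
        + (if i = j then ∫ a, dicaY D a i ∂(Measure.pi ν) else 0) := by
    rw [integral_eq_lintegral_of_nonneg_ae (Filter.Eventually.of_forall fun ω =>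
        mul_nonneg (Nat.cast_nonneg _) (Nat.cast_nonneg _))
      ((hxmeas i).mul (hxmeas j)).aestronglyMeasurable]
    have h0 : ∫⁻ ω, ENNReal.ofReal ((ω.2 i : ℝ) * (ω.2 j : ℝ)) ∂P
        = ∫⁻ ω, ((ω.2 i : ℕ) : ℝ≥0∞) * ((ω.2 j : ℕ) : ℝ≥0∞) ∂P := by
      simp_rw [ENNReal.ofReal_mul (Nat.cast_nonneg _), ENNReal.ofReal_natCast]
    rw [h0, hL2]
    rcases eq_or_ne i j with rfl | hij
    · rw [if_pos rfl, if_pos rfl,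
        ENNReal.toReal_add ENNReal.ofReal_ne_top ENNReal.ofReal_ne_top,
        ENNReal.toReal_ofReal (hEyynn i i), ENNReal.toReal_ofReal (hEynn i)]
    · rw [if_neg hij, if_neg hij, add_zero, add_zero, ENNReal.toReal_ofReal (hEyynn i j)]
  -- ## covariance expansion
  have hexpand : ∫ ω, ((ω.2 i : ℝ) - ∫ ω', (ω'.2 i : ℝ) ∂P)
        * ((ω.2 j : ℝ) - ∫ ω', (ω'.2 j : ℝ) ∂P) ∂P
      = ∫ ω, (ω.2 i : ℝ) * (ω.2 j : ℝ) ∂P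
        - (∫ ω, (ω.2 i : ℝ) ∂P) * ∫ ω, (ω.2 j : ℝ) ∂P := by
    set cX := ∫ ω', (ω'.2 i : ℝ) ∂P with hcX
    set cY := ∫ ω', (ω'.2 j : ℝ) ∂P with hcY
    have h1 : (fun ω : (Fin K → ℝ) × (Fin M → ℕ) => ((ω.2 i : ℝ) - cX) * ((ω.2 j : ℝ) - cY))
        = fun ω => (ω.2 i : ℝ) * (ω.2 j : ℝ) - cX * (ω.2 j : ℝ) - cY * (ω.2 i : ℝ) + cX * cY := by
      funext ω
      ring
    rw [h1]
    have hf1 : Integrable (fun ω : (Fin K → ℝ) × (Fin M → ℕ) =>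
        (ω.2 i : ℝ) * (ω.2 j : ℝ) - cX * (ω.2 j : ℝ)) P := hIXY.sub ((hIX j).const_mul cX)
    have hf2 : Integrable (fun ω : (Fin K → ℝ) × (Fin M → ℕ) =>
        (ω.2 i : ℝ) * (ω.2 j : ℝ) - cX * (ω.2 j : ℝ) - cY * (ω.2 i : ℝ)) P :=
      hf1.sub ((hIX i).const_mul cY)
    calc ∫ ω, ((ω.2 i : ℝ) * (ω.2 j : ℝ) - cX * (ω.2 j : ℝ) - cY * (ω.2 i : ℝ) + cX * cY) ∂P
        = (∫ ω, ((ω.2 i : ℝ) * (ω.2 j : ℝ) - cX * (ω.2 j : ℝ) - cY * (ω.2 i : ℝ)) ∂P)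
            + ∫ _ω, cX * cY ∂P := integral_add hf2 (integrable_const _)
      _ = ((∫ ω, ((ω.2 i : ℝ) * (ω.2 j : ℝ) - cX * (ω.2 j : ℝ)) ∂P)
            - ∫ ω, cY * (ω.2 i : ℝ) ∂P) + ∫ _ω, cX * cY ∂P := by
          rw [integral_sub hf1 ((hIX i).const_mul cY)]
      _ = ((∫ ω, (ω.2 i : ℝ) * (ω.2 j : ℝ) ∂P - ∫ ω, cX * (ω.2 j : ℝ) ∂P)
            - ∫ ω, cY * (ω.2 i : ℝ) ∂P) + ∫ _ω, cX * cY ∂P := by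
          rw [integral_sub hIXY ((hIX j).const_mul cX)]
      _ = ∫ ω, (ω.2 i : ℝ) * (ω.2 j : ℝ) ∂P - cX * cY := by
          rw [integral_const_mul, integral_const_mul, integral_const]
          simp only [measure_univ, probReal_univ, ENNReal.toReal_one, smul_eq_mul, one_mul, mul_one]
          rw [← hcX, ← hcY]
          ring
  rw [hexpand, hEXY, hEX i, hEX j]
  have halg : ∫ a, dicaY D a i * dicaY D a j ∂(Measure.pi ν)
        + (if i = j then ∫ a, dicaY D a i ∂(Measure.pi ν) else 0)
        - (∫ a, dicaY D a i ∂(Measure.pi ν)) * (∫ a, dicaY D a j ∂(Measure.pi ν))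
        - (if i = j then ∫ a, dicaY D a i ∂(Measure.pi ν) else 0)
      = ∫ a, dicaY D a i * dicaY D a j ∂(Measure.pi ν)
        - (∫ a, dicaY D a i ∂(Measure.pi ν)) * ∫ a, dicaY D a j ∂(Measure.pi ν) := by
    ring
  rw [halg, hkey]
  refine Finset.sum_congr rfl fun k _ => ?_
  have hvar : variance (fun t : ℝ => t) (ν k) = (∫ t, t * t ∂ν k) - (∫ t, t ∂ν k) ^ 2 := by
    rw [variance_eq_sub (hν2 k)]
    congr 1
    refine integral_congr_ae (Filter.Eventually.of_forall fun t => ?_)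
    simp [pow_two]
  rw [hvar]
end

section
/- (Law of total cumulance, third order.) Let x_1, x_2, x_3 be real random variables with E|x_i|³ < ∞ and let 𝒢 be a sub-σ-algebra. Then cum(x_1,x_2,x_3) = E[cum(x_1,x_2,x_3 | 𝒢)] + cum(E[x_1|𝒢], E[x_2|𝒢], E[x_3|𝒢]) + Cov(E[x_1|𝒢], Cov(x_2,x_3|𝒢)) + Cov(E[x_2|𝒢], Cov(x_1,x_3|𝒢)) + Cov(E[x_3|𝒢], Cov(x_1,x_2|𝒢)). -/
open MeasureTheory ProbabilityTheory

open Filter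
open scoped ENNReal


section Auxiliary

variable {Ω : Type*} {m0 : MeasurableSpace Ω} {P : Measure Ω} [IsProbabilityMeasure P]
  {G : MeasurableSpace Ω}

private lemma cube_affine_le (x q : ℝ) : |q| ^ 3 + 3 * q * |q| * (x - q) ≤ |x| ^ 3 := by
  rcases le_or_gt 0 x with hx | hx <;> rcases le_or_gt 0 q with hq | hq
  · rw [abs_of_nonneg hx, abs_of_nonneg hq]; nlinarith [sq_nonneg (x - q), sq_nonneg (x + q)]
  · rw [abs_of_nonneg hx, abs_of_neg hq]; nlinarith [sq_nonneg (x - q), sq_nonneg (x + q)]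
  · rw [abs_of_neg hx, abs_of_nonneg hq]; nlinarith [sq_nonneg (x - q), sq_nonneg (x + q)]
  · rw [abs_of_neg hx, abs_of_neg hq]; nlinarith [sq_nonneg (x - q), sq_nonneg (x + q)]

private lemma cube_sup_of_affine {x M : ℝ}
    (h : ∀ q : ℚ, |(q:ℝ)| ^ 3 + 3 * (q:ℝ) * |(q:ℝ)| * (x - q) ≤ M) : |x| ^ 3 ≤ M := by
  set F : ℝ → ℝ := fun t => |t| ^ 3 + 3 * t * |t| * (x - t) with hF
  have hFc : Continuous F := by
    apply Continuous.add
    · exact (continuous_abs.pow 3)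
    · exact (((continuous_const.mul continuous_id).mul continuous_abs).mul
        (continuous_const.sub continuous_id))
  have hFx : F x = |x| ^ 3 := by simp [hF]
  have hxc : x ∈ closure (Set.range ((↑) : ℚ → ℝ)) := by
    rw [Rat.denseRange_cast.closure_range]; trivial
  obtain ⟨u, hu_mem, hu_tend⟩ := mem_closure_iff_seq_limit.mp hxc
  have htend : Tendsto (F ∘ u) atTop (nhds (F x)) := (hFc.tendsto x).comp hu_tend
  have hle : ∀ n, (F ∘ u) n ≤ M := by
    intro n
    obtain ⟨q, hq⟩ := hu_mem n
    simp only [Function.comp_apply, ← hq]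
    exact h q
  have := le_of_tendsto htend (Eventually.of_forall hle)
  rwa [hFx] at this

private lemma condexp_cube_le (hG : G ≤ m0) {f : Ω → ℝ}
    (hf : Integrable f P) (hf3 : Integrable (fun ω => |f ω| ^ 3) P) :
    ∀ᵐ ω ∂P, |(P[f|G]) ω| ^ 3 ≤ (P[(fun a => |f a| ^ 3)|G]) ω := by
  have key : ∀ q : ℚ, ∀ᵐ ω ∂P,
      |(q:ℝ)| ^ 3 + 3 * (q:ℝ) * |(q:ℝ)| * ((P[f|G]) ω - q) ≤ (P[(fun a => |f a| ^ 3)|G]) ω := by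
    intro q
    obtain ⟨c, hc⟩ : ∃ c : ℝ, c = 3 * (q:ℝ) * |(q:ℝ)| := ⟨_, rfl⟩
    obtain ⟨d, hd⟩ : ∃ d : ℝ, d = |(q:ℝ)| ^ 3 - c * q := ⟨_, rfl⟩
    have hle : (fun a => d + c * f a) ≤ᵐ[P] fun a => |f a| ^ 3 := by
      refine Eventually.of_forall fun a => ?_
      have h := cube_affine_le (f a) (q:ℝ)
      have hring : (3:ℝ) * (q:ℝ) * |(q:ℝ)| * (f a - q)
          = 3 * (q:ℝ) * |(q:ℝ)| * f a - 3 * (q:ℝ) * |(q:ℝ)| * q := by ring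
      simp only [hd, hc]
      linarith [h, hring]
    have hint : Integrable (fun a => d + c * f a) P := (integrable_const d).add (hf.const_mul c)
    have hmono := condExp_mono (m := G) hint hf3 hle
    have heq : P[(fun a => d + c * f a)|G] =ᵐ[P] fun ω => d + c * (P[f|G]) ω := by
      have hfun : (fun a => d + c * f a) = (fun _ => d) + c • f := by
        funext a; simp [smul_eq_mul]
      rw [hfun]
      refine (condExp_add (integrable_const d)
        ((hf.const_mul c).congr ?_ : Integrable (c • f) P) G).trans ?_
      · exact Eventually.of_forall fun a => rfl
      have h1 : P[(fun _ => d : Ω → ℝ)|G] = fun _ => d := condExp_const hG d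
      have h2 : P[(c • f)|G] =ᵐ[P] c • P[f|G] := condExp_smul c f G
      filter_upwards [h2] with ω h2ω
      simp only [Pi.add_apply, h1, h2ω, Pi.smul_apply, smul_eq_mul]
    filter_upwards [hmono, heq] with ω h1 h2
    have h3 : d + c * (P[f|G]) ω ≤ (P[(fun a => |f a| ^ 3)|G]) ω := by
      rw [← h2]; exact h1
    have hring : c * ((P[f|G]) ω - q) = c * (P[f|G]) ω - c * q := by ring
    rw [← hc]
    linarith [h3, hring, hd.symm.le, hd.le]
  filter_upwards [(ae_all_iff.mpr key : ∀ᵐ ω ∂P, ∀ q : ℚ, _)] with ω hω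
  exact cube_sup_of_affine hω

private lemma abs_cube_measurable {α : Type*} {m : MeasurableSpace α} (g : α → ℝ)
    (hg : StronglyMeasurable[m] g) : Measurable[m] fun ω => |g ω| ^ 3 :=
  (hg.measurable.abs).pow_const 3

private lemma norm_rpow3_eq (g : Ω → ℝ) :
    (fun x => ‖g x‖ ^ (3:ℝ≥0∞).toReal) = fun x => |g x| ^ 3 := by
  funext x
  rw [Real.norm_eq_abs, show (3:ℝ≥0∞).toReal = ((3:ℕ):ℝ) by norm_num, Real.rpow_natCast]

private lemma memL3_condexp (hG : G ≤ m0) {f : Ω → ℝ} (hf : MemLp f 3 P) :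
    MemLp (P[f|G]) 3 P := by
  have hfi : Integrable f P := hf.integrable (by norm_num)
  have hf3 : Integrable (fun ω => |f ω| ^ 3) P := by
    have h := hf.integrable_norm_rpow (by norm_num) (by norm_num)
    rwa [norm_rpow3_eq] at h
  have hj := condexp_cube_le hG hfi hf3
  have hsm : StronglyMeasurable[m0] (P[f|G]) := stronglyMeasurable_condExp.mono hG
  have hmeas : Measurable[m0] (fun ω => |(P[f|G]) ω| ^ 3) :=
    abs_cube_measurable _ hsm
  have hgm : AEStronglyMeasurable[m0] (fun ω => |(P[f|G]) ω| ^ 3) P :=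
    hmeas.aestronglyMeasurable
  have hgi : Integrable (fun ω => |(P[f|G]) ω| ^ 3) P := by
    refine Integrable.mono' (integrable_condExp (f := fun a => |f a| ^ 3) (m := G)) hgm ?_
    filter_upwards [hj] with ω h
    rwa [Real.norm_eq_abs, abs_of_nonneg (pow_nonneg (abs_nonneg _) 3)]
  have h1 : MemLp (fun x => ‖(P[f|G]) x‖ ^ (3:ℝ≥0∞).toReal) 1 P := by
    refine memLp_one_iff_integrable.mpr ?_
    rwa [norm_rpow3_eq]
  have h33 : (3:ℝ≥0∞)/3 = 1 := ENNReal.div_self (by norm_num) (by norm_num)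
  rw [← h33] at h1
  exact (memLp_norm_rpow_iff hsm.aestronglyMeasurable (by norm_num) (by norm_num)).mp h1

private lemma ennreal_holder1 : (1:ℝ≥0∞)/(3/2) = 1/3 + 1/3 := by
  rw [ENNReal.div_add_div_same, one_div, ENNReal.inv_div (by norm_num) (by norm_num)]
  norm_num

private lemma ennreal_holder2 : (1:ℝ≥0∞)/1 = 1/(3/2) + 1/3 := by
  rw [one_div (3/2 : ℝ≥0∞), ENNReal.inv_div (by norm_num) (by norm_num),
    ENNReal.div_add_div_same, div_one]
  have : ((2:ℝ≥0∞)+1) = 3 := by norm_num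
  rw [this, ENNReal.div_self] <;> norm_num

omit [IsProbabilityMeasure P] in
private lemma memL3_mul {f g : Ω → ℝ} (hf : MemLp f 3 P) (hg : MemLp g 3 P) :
    MemLp (fun ω => f ω * g ω) (3/2) P :=
  hg.smul (φ := f) hf (hpqr := ⟨by simpa only [one_div] using ennreal_holder1.symm⟩)

omit [IsProbabilityMeasure P] in
private lemma memL3_prod_integrable {f g h : Ω → ℝ} (hf : MemLp f 3 P) (hg : MemLp g 3 P)
    (hh : MemLp h 3 P) : Integrable (fun ω => f ω * g ω * h ω) P := by
  have h2 : MemLp (fun ω => (fun ω => f ω * g ω) ω * h ω) 1 P :=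
    hh.smul (memL3_mul hf hg) (hpqr := ⟨by simpa only [one_div] using ennreal_holder2.symm⟩)
  exact memLp_one_iff_integrable.mp h2

private lemma memL3_mul_integrable {f g : Ω → ℝ} (hf : MemLp f 3 P) (hg : MemLp g 3 P) :
    Integrable (fun ω => f ω * g ω) P := by
  have h := memL3_prod_integrable hf hg (memLp_const (1:ℝ))
  simpa using h

private lemma integral_mul_condexp (hG : G ≤ m0) {b w : Ω → ℝ}
    (hbG : StronglyMeasurable[G] b) (hw : Integrable w P)
    (hbw : Integrable (fun ω => b ω * w ω) P) :
    ∫ ω, b ω * (P[w|G]) ω ∂P = ∫ ω, b ω * w ω ∂P := by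
  haveI : SigmaFinite (P.trim hG) := inferInstance
  have hpull : P[b * w|G] =ᵐ[P] b * P[w|G] :=
    condExp_mul_of_stronglyMeasurable_left hbG (by exact hbw) hw
  have h1 : ∫ ω, (P[b * w|G]) ω ∂P = ∫ ω, (b * P[w|G]) ω ∂P := integral_congr_ae hpull
  have h2 : ∫ ω, (P[b * w|G]) ω ∂P = ∫ ω, (b * w) ω ∂P := integral_condExp hG
  calc ∫ ω, b ω * (P[w|G]) ω ∂P = ∫ ω, (b * P[w|G]) ω ∂P := rfl
    _ = ∫ ω, (b * w) ω ∂P := by rw [← h1, h2]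
    _ = ∫ ω, b ω * w ω ∂P := rfl

private lemma condexp_center_zero (hG : G ≤ m0) {x : Ω → ℝ} (hx : Integrable x P) :
    P[(fun ω => x ω - (P[x|G]) ω)|G] =ᵐ[P] fun _ => (0:ℝ) := by
  haveI : SigmaFinite (P.trim hG) := inferInstance
  have h : P[x - P[x|G]|G] =ᵐ[P] P[x|G] - P[P[x|G]|G] :=
    condExp_sub hx integrable_condExp G
  rw [condExp_of_stronglyMeasurable hG stronglyMeasurable_condExp integrable_condExp] at h
  refine EventuallyEq.trans (by exact h) (Eventually.of_forall fun ω => ?_)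
  simp

private lemma zero_term (hG : G ≤ m0) {x w : Ω → ℝ} (hx : Integrable x P)
    (hwG : StronglyMeasurable[G] w)
    (hwa : Integrable (fun ω => w ω * (x ω - (P[x|G]) ω)) P) :
    ∫ ω, w ω * (x ω - (P[x|G]) ω) ∂P = 0 := by
  haveI : SigmaFinite (P.trim hG) := inferInstance
  have hx' : Integrable (fun ω => x ω - (P[x|G]) ω) P := hx.sub integrable_condExp
  rw [← integral_mul_condexp hG hwG hx' hwa]
  have h0 := condexp_center_zero hG hx
  have : (fun ω => w ω * (P[(fun ω => x ω - (P[x|G]) ω)|G]) ω) =ᵐ[P] fun _ => (0:ℝ) := by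
    filter_upwards [h0] with ω hω
    rw [hω]; ring
  rw [integral_congr_ae this, integral_zero]

private lemma integral_centered_condexp_zero (hG : G ≤ m0) {x : Ω → ℝ} (hx : Integrable x P) :
    ∫ ω, ((P[x|G]) ω - ∫ a, x a ∂P) ∂P = 0 := by
  haveI : SigmaFinite (P.trim hG) := inferInstance
  rw [integral_sub integrable_condExp (integrable_const _), integral_condExp hG, integral_const]
  simp

private lemma cov_term (hG : G ≤ m0) {x u v : Ω → ℝ} (hx : MemLp x 3 P) (hu : MemLp u 3 P)
    (hv : MemLp v 3 P) (hxG3 : MemLp (P[x|G]) 3 P) :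
    ∫ ω, ((P[x|G]) ω - ∫ a, (P[x|G]) a ∂P) *
        ((P[(fun a => u a * v a)|G]) ω - ∫ a, (P[(fun a => u a * v a)|G]) a ∂P) ∂P
      = ∫ ω, ((P[x|G]) ω - ∫ a, x a ∂P) * u ω * v ω ∂P := by
  haveI : SigmaFinite (P.trim hG) := inferInstance
  have hgx : ∫ a, (P[x|G]) a ∂P = ∫ a, x a ∂P := integral_condExp hG
  rw [hgx]
  have hbG : StronglyMeasurable[G] (fun ω => (P[x|G]) ω - ∫ a, x a ∂P) :=
    stronglyMeasurable_condExp.sub stronglyMeasurable_const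
  have hb3 : MemLp (fun ω => (P[x|G]) ω - ∫ a, x a ∂P) 3 P := hxG3.sub (memLp_const _)
  have hb_int : Integrable (fun ω => (P[x|G]) ω - ∫ a, x a ∂P) P :=
    hb3.integrable (by norm_num)
  have huv_int : Integrable (fun a => u a * v a) P := memL3_mul_integrable hu hv
  set k := ∫ a, (P[(fun a => u a * v a)|G]) a ∂P with hk
  have hA : P[(fun a => u a * v a - k)|G] =ᵐ[P]
      fun ω => (P[(fun a => u a * v a)|G]) ω - k := by
    have h1 : P[(fun a => u a * v a) - (fun _ => k)|G] =ᵐ[P]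
        P[(fun a => u a * v a)|G] - P[(fun _ => k : Ω → ℝ)|G] :=
      condExp_sub huv_int (integrable_const k) G
    have h2 : P[(fun _ => k : Ω → ℝ)|G] = fun _ => k := condExp_const hG k
    refine EventuallyEq.trans (by exact h1) ?_
    rw [h2]
    exact Eventually.of_forall fun ω => rfl
  have htriple : Integrable
      (fun ω => ((P[x|G]) ω - ∫ a, x a ∂P) * u ω * v ω) P :=
    memL3_prod_integrable hb3 hu hv
  have hbw : Integrable
      (fun ω => ((P[x|G]) ω - ∫ a, x a ∂P) * (u ω * v ω - k)) P := by
    refine (htriple.sub (hb_int.mul_const k)).congr ?_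
    exact Eventually.of_forall fun ω => by simp only [Pi.sub_apply]; ring
  calc ∫ ω, ((P[x|G]) ω - ∫ a, x a ∂P) * ((P[(fun a => u a * v a)|G]) ω - k) ∂P
      = ∫ ω, ((P[x|G]) ω - ∫ a, x a ∂P) * (P[(fun a => u a * v a - k)|G]) ω ∂P := by
        refine integral_congr_ae ?_
        filter_upwards [hA] with ω hω
        rw [hω]
    _ = ∫ ω, ((P[x|G]) ω - ∫ a, x a ∂P) * (u ω * v ω - k) ∂P :=
        integral_mul_condexp hG hbG (huv_int.sub (integrable_const k)) hbw
    _ = ∫ ω, (((P[x|G]) ω - ∫ a, x a ∂P) * u ω * v ω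
          - ((P[x|G]) ω - ∫ a, x a ∂P) * k) ∂P := by
        refine integral_congr_ae (Eventually.of_forall fun ω => ?_)
        ring
    _ = ∫ ω, ((P[x|G]) ω - ∫ a, x a ∂P) * u ω * v ω ∂P
          - ∫ ω, ((P[x|G]) ω - ∫ a, x a ∂P) * k ∂P :=
        integral_sub htriple (hb_int.mul_const k)
    _ = ∫ ω, ((P[x|G]) ω - ∫ a, x a ∂P) * u ω * v ω ∂P := by
        rw [integral_mul_const, integral_centered_condexp_zero hG (hx.integrable (by norm_num))]
        ring

omit [IsProbabilityMeasure P] in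
private lemma integral_add8 {f1 f2 f3 f4 f5 f6 f7 f8 : Ω → ℝ}
    (h1 : Integrable f1 P) (h2 : Integrable f2 P) (h3 : Integrable f3 P)
    (h4 : Integrable f4 P) (h5 : Integrable f5 P) (h6 : Integrable f6 P)
    (h7 : Integrable f7 P) (h8 : Integrable f8 P) :
    ∫ ω, (f1 ω + f2 ω + f3 ω + f4 ω + f5 ω + f6 ω + f7 ω + f8 ω) ∂P
      = ∫ ω, f1 ω ∂P + ∫ ω, f2 ω ∂P + ∫ ω, f3 ω ∂P + ∫ ω, f4 ω ∂P + ∫ ω, f5 ω ∂P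
        + ∫ ω, f6 ω ∂P + ∫ ω, f7 ω ∂P + ∫ ω, f8 ω ∂P := by
  have h12 : Integrable (fun ω => f1 ω + f2 ω) P := h1.add h2
  have h13 : Integrable (fun ω => f1 ω + f2 ω + f3 ω) P := h12.add h3
  have h14 : Integrable (fun ω => f1 ω + f2 ω + f3 ω + f4 ω) P := h13.add h4
  have h15 : Integrable (fun ω => f1 ω + f2 ω + f3 ω + f4 ω + f5 ω) P := h14.add h5
  have h16 : Integrable (fun ω => f1 ω + f2 ω + f3 ω + f4 ω + f5 ω + f6 ω) P := h15.add h6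
  have h17 : Integrable (fun ω => f1 ω + f2 ω + f3 ω + f4 ω + f5 ω + f6 ω + f7 ω) P := h16.add h7
  rw [integral_add h17 h8, integral_add h16 h7, integral_add h15 h6, integral_add h14 h5,
    integral_add h13 h4, integral_add h12 h3, integral_add h1 h2]

end Auxiliary


/-- Covariance of two real random variables. -/
noncomputable def covRV {Ω : Type*} {m0 : MeasurableSpace Ω} (P : @MeasureTheory.Measure Ω m0)
    (f g : Ω → ℝ) : ℝ :=
  ∫ ω, (f ω - ∫ a, f a ∂P) * (g ω - ∫ a, g a ∂P) ∂P

/-- Third (joint) cumulant of three real random variables. -/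
noncomputable def cum3RV {Ω : Type*} {m0 : MeasurableSpace Ω} (P : @MeasureTheory.Measure Ω m0)
    (f g h : Ω → ℝ) : ℝ :=
  ∫ ω, (f ω - ∫ a, f a ∂P) * (g ω - ∫ a, g a ∂P) * (h ω - ∫ a, h a ∂P) ∂P

/-- Conditional covariance given a sub-σ-algebra `G`. -/
noncomputable def condCovRV {Ω : Type*} {m0 : MeasurableSpace Ω} (G : MeasurableSpace Ω)
    (P : @MeasureTheory.Measure Ω m0) (f g : Ω → ℝ) : Ω → ℝ :=
  P[(fun a => (f a - (P[f|G]) a) * (g a - (P[g|G]) a)) | G]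

/-- Conditional third cumulant given a sub-σ-algebra `G`. -/
noncomputable def condCum3RV {Ω : Type*} {m0 : MeasurableSpace Ω} (G : MeasurableSpace Ω)
    (P : @MeasureTheory.Measure Ω m0) (f g h : Ω → ℝ) : Ω → ℝ :=
  P[(fun a => (f a - (P[f|G]) a) * (g a - (P[g|G]) a) * (h a - (P[h|G]) a)) | G]

/-- **law of total cumulance, third order.** For real random variables
`x₁, x₂, x₃` with finite third moments and a sub-σ-algebra `G`,
`cum(x₁,x₂,x₃) = E[cum(x₁,x₂,x₃|G)] + cum(E[x₁|G],E[x₂|G],E[x₃|G])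
 + Cov(E[x₁|G], Cov(x₂,x₃|G)) + Cov(E[x₂|G], Cov(x₁,x₃|G)) + Cov(E[x₃|G], Cov(x₁,x₂|G))`. -/
theorem law_of_total_cumulance_third_order
    {Ω : Type*} {m0 : MeasurableSpace Ω} (P : @MeasureTheory.Measure Ω m0)
    [IsProbabilityMeasure P]
    (G : MeasurableSpace Ω) (hG : G ≤ m0)
    (x1 x2 x3 : Ω → ℝ)
    (h1 : MemLp x1 3 P) (h2 : MemLp x2 3 P) (h3 : MemLp x3 3 P) :
    cum3RV P x1 x2 x3
      = (∫ ω, condCum3RV G P x1 x2 x3 ω ∂P)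
        + cum3RV P (P[x1|G]) (P[x2|G]) (P[x3|G])
        + covRV P (P[x1|G]) (condCovRV G P x2 x3)
        + covRV P (P[x2|G]) (condCovRV G P x1 x3)
        + covRV P (P[x3|G]) (condCovRV G P x1 x2) := by
  haveI : SigmaFinite (P.trim hG) := inferInstance
  have hg1 : MemLp (P[x1|G]) 3 P := memL3_condexp hG h1
  have hg2 : MemLp (P[x2|G]) 3 P := memL3_condexp hG h2
  have hg3 : MemLp (P[x3|G]) 3 P := memL3_condexp hG h3
  have ha1 : MemLp (fun ω => x1 ω - (P[x1|G]) ω) 3 P := h1.sub hg1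
  have ha2 : MemLp (fun ω => x2 ω - (P[x2|G]) ω) 3 P := h2.sub hg2
  have ha3 : MemLp (fun ω => x3 ω - (P[x3|G]) ω) 3 P := h3.sub hg3
  have hb1 : MemLp (fun ω => (P[x1|G]) ω - ∫ a, x1 a ∂P) 3 P := hg1.sub (memLp_const _)
  have hb2 : MemLp (fun ω => (P[x2|G]) ω - ∫ a, x2 a ∂P) 3 P := hg2.sub (memLp_const _)
  have hb3 : MemLp (fun ω => (P[x3|G]) ω - ∫ a, x3 a ∂P) 3 P := hg3.sub (memLp_const _)
  have hsb1 : StronglyMeasurable[G] (fun ω => (P[x1|G]) ω - ∫ a, x1 a ∂P) :=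
    stronglyMeasurable_condExp.sub stronglyMeasurable_const
  have hsb2 : StronglyMeasurable[G] (fun ω => (P[x2|G]) ω - ∫ a, x2 a ∂P) :=
    stronglyMeasurable_condExp.sub stronglyMeasurable_const
  have hsb3 : StronglyMeasurable[G] (fun ω => (P[x3|G]) ω - ∫ a, x3 a ∂P) :=
    stronglyMeasurable_condExp.sub stronglyMeasurable_const
  -- integrability of the eight terms
  have J1 : Integrable (fun ω => (x1 ω - (P[x1|G]) ω) * (x2 ω - (P[x2|G]) ω)
      * (x3 ω - (P[x3|G]) ω)) P := memL3_prod_integrable ha1 ha2 ha3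
  have J2 : Integrable (fun ω => ((P[x1|G]) ω - ∫ a, x1 a ∂P) * ((P[x2|G]) ω - ∫ a, x2 a ∂P)
      * ((P[x3|G]) ω - ∫ a, x3 a ∂P)) P := memL3_prod_integrable hb1 hb2 hb3
  have J3 : Integrable (fun ω => ((P[x1|G]) ω - ∫ a, x1 a ∂P) * (x2 ω - (P[x2|G]) ω)
      * (x3 ω - (P[x3|G]) ω)) P := memL3_prod_integrable hb1 ha2 ha3
  have J4 : Integrable (fun ω => ((P[x2|G]) ω - ∫ a, x2 a ∂P) * (x1 ω - (P[x1|G]) ω)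
      * (x3 ω - (P[x3|G]) ω)) P := memL3_prod_integrable hb2 ha1 ha3
  have J5 : Integrable (fun ω => ((P[x3|G]) ω - ∫ a, x3 a ∂P) * (x1 ω - (P[x1|G]) ω)
      * (x2 ω - (P[x2|G]) ω)) P := memL3_prod_integrable hb3 ha1 ha2
  have J6 : Integrable (fun ω => ((P[x2|G]) ω - ∫ a, x2 a ∂P) * ((P[x3|G]) ω - ∫ a, x3 a ∂P)
      * (x1 ω - (P[x1|G]) ω)) P := memL3_prod_integrable hb2 hb3 ha1
  have J7 : Integrable (fun ω => ((P[x1|G]) ω - ∫ a, x1 a ∂P) * ((P[x3|G]) ω - ∫ a, x3 a ∂P)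
      * (x2 ω - (P[x2|G]) ω)) P := memL3_prod_integrable hb1 hb3 ha2
  have J8 : Integrable (fun ω => ((P[x1|G]) ω - ∫ a, x1 a ∂P) * ((P[x2|G]) ω - ∫ a, x2 a ∂P)
      * (x3 ω - (P[x3|G]) ω)) P := memL3_prod_integrable hb1 hb2 ha3
  -- expansion of the integrand
  have hexp : ∫ ω, (x1 ω - ∫ a, x1 a ∂P) * (x2 ω - ∫ a, x2 a ∂P) * (x3 ω - ∫ a, x3 a ∂P) ∂P
      = ∫ ω, ((x1 ω - (P[x1|G]) ω) * (x2 ω - (P[x2|G]) ω) * (x3 ω - (P[x3|G]) ω)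
        + ((P[x1|G]) ω - ∫ a, x1 a ∂P) * ((P[x2|G]) ω - ∫ a, x2 a ∂P)
            * ((P[x3|G]) ω - ∫ a, x3 a ∂P)
        + ((P[x1|G]) ω - ∫ a, x1 a ∂P) * (x2 ω - (P[x2|G]) ω) * (x3 ω - (P[x3|G]) ω)
        + ((P[x2|G]) ω - ∫ a, x2 a ∂P) * (x1 ω - (P[x1|G]) ω) * (x3 ω - (P[x3|G]) ω)
        + ((P[x3|G]) ω - ∫ a, x3 a ∂P) * (x1 ω - (P[x1|G]) ω) * (x2 ω - (P[x2|G]) ω)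
        + ((P[x2|G]) ω - ∫ a, x2 a ∂P) * ((P[x3|G]) ω - ∫ a, x3 a ∂P) * (x1 ω - (P[x1|G]) ω)
        + ((P[x1|G]) ω - ∫ a, x1 a ∂P) * ((P[x3|G]) ω - ∫ a, x3 a ∂P) * (x2 ω - (P[x2|G]) ω)
        + ((P[x1|G]) ω - ∫ a, x1 a ∂P) * ((P[x2|G]) ω - ∫ a, x2 a ∂P) * (x3 ω - (P[x3|G]) ω)) ∂P
      := integral_congr_ae (Eventually.of_forall fun ω => by ring)
  have hsum : ∫ ω, ((x1 ω - (P[x1|G]) ω) * (x2 ω - (P[x2|G]) ω) * (x3 ω - (P[x3|G]) ω)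
        + ((P[x1|G]) ω - ∫ a, x1 a ∂P) * ((P[x2|G]) ω - ∫ a, x2 a ∂P)
            * ((P[x3|G]) ω - ∫ a, x3 a ∂P)
        + ((P[x1|G]) ω - ∫ a, x1 a ∂P) * (x2 ω - (P[x2|G]) ω) * (x3 ω - (P[x3|G]) ω)
        + ((P[x2|G]) ω - ∫ a, x2 a ∂P) * (x1 ω - (P[x1|G]) ω) * (x3 ω - (P[x3|G]) ω)
        + ((P[x3|G]) ω - ∫ a, x3 a ∂P) * (x1 ω - (P[x1|G]) ω) * (x2 ω - (P[x2|G]) ω)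
        + ((P[x2|G]) ω - ∫ a, x2 a ∂P) * ((P[x3|G]) ω - ∫ a, x3 a ∂P) * (x1 ω - (P[x1|G]) ω)
        + ((P[x1|G]) ω - ∫ a, x1 a ∂P) * ((P[x3|G]) ω - ∫ a, x3 a ∂P) * (x2 ω - (P[x2|G]) ω)
        + ((P[x1|G]) ω - ∫ a, x1 a ∂P) * ((P[x2|G]) ω - ∫ a, x2 a ∂P)
            * (x3 ω - (P[x3|G]) ω)) ∂P
      = ∫ ω, (x1 ω - (P[x1|G]) ω) * (x2 ω - (P[x2|G]) ω) * (x3 ω - (P[x3|G]) ω) ∂P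
        + ∫ ω, ((P[x1|G]) ω - ∫ a, x1 a ∂P) * ((P[x2|G]) ω - ∫ a, x2 a ∂P)
            * ((P[x3|G]) ω - ∫ a, x3 a ∂P) ∂P
        + ∫ ω, ((P[x1|G]) ω - ∫ a, x1 a ∂P) * (x2 ω - (P[x2|G]) ω) * (x3 ω - (P[x3|G]) ω) ∂P
        + ∫ ω, ((P[x2|G]) ω - ∫ a, x2 a ∂P) * (x1 ω - (P[x1|G]) ω) * (x3 ω - (P[x3|G]) ω) ∂P
        + ∫ ω, ((P[x3|G]) ω - ∫ a, x3 a ∂P) * (x1 ω - (P[x1|G]) ω) * (x2 ω - (P[x2|G]) ω) ∂P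
        + ∫ ω, ((P[x2|G]) ω - ∫ a, x2 a ∂P) * ((P[x3|G]) ω - ∫ a, x3 a ∂P)
            * (x1 ω - (P[x1|G]) ω) ∂P
        + ∫ ω, ((P[x1|G]) ω - ∫ a, x1 a ∂P) * ((P[x3|G]) ω - ∫ a, x3 a ∂P)
            * (x2 ω - (P[x2|G]) ω) ∂P
        + ∫ ω, ((P[x1|G]) ω - ∫ a, x1 a ∂P) * ((P[x2|G]) ω - ∫ a, x2 a ∂P)
            * (x3 ω - (P[x3|G]) ω) ∂P :=
    integral_add8 J1 J2 J3 J4 J5 J6 J7 J8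
  -- the three vanishing terms
  have hz6 : ∫ ω, ((P[x2|G]) ω - ∫ a, x2 a ∂P) * ((P[x3|G]) ω - ∫ a, x3 a ∂P)
      * (x1 ω - (P[x1|G]) ω) ∂P = 0 :=
    zero_term hG (h1.integrable (by norm_num)) (hsb2.mul hsb3) J6
  have hz7 : ∫ ω, ((P[x1|G]) ω - ∫ a, x1 a ∂P) * ((P[x3|G]) ω - ∫ a, x3 a ∂P)
      * (x2 ω - (P[x2|G]) ω) ∂P = 0 :=
    zero_term hG (h2.integrable (by norm_num)) (hsb1.mul hsb3) J7
  have hz8 : ∫ ω, ((P[x1|G]) ω - ∫ a, x1 a ∂P) * ((P[x2|G]) ω - ∫ a, x2 a ∂P)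
      * (x3 ω - (P[x3|G]) ω) ∂P = 0 :=
    zero_term hG (h3.integrable (by norm_num)) (hsb1.mul hsb2) J8
  -- identification of the right-hand side terms
  have hT1 : ∫ ω, condCum3RV G P x1 x2 x3 ω ∂P
      = ∫ ω, (x1 ω - (P[x1|G]) ω) * (x2 ω - (P[x2|G]) ω) * (x3 ω - (P[x3|G]) ω) ∂P :=
    integral_condExp hG
  have hT2 : cum3RV P (P[x1|G]) (P[x2|G]) (P[x3|G])
      = ∫ ω, ((P[x1|G]) ω - ∫ a, x1 a ∂P) * ((P[x2|G]) ω - ∫ a, x2 a ∂P)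
          * ((P[x3|G]) ω - ∫ a, x3 a ∂P) ∂P := by
    simp only [cum3RV]
    rw [integral_condExp hG, integral_condExp hG, integral_condExp hG]
  have hT3 : covRV P (P[x1|G]) (condCovRV G P x2 x3)
      = ∫ ω, ((P[x1|G]) ω - ∫ a, x1 a ∂P) * (x2 ω - (P[x2|G]) ω) * (x3 ω - (P[x3|G]) ω) ∂P :=
    cov_term hG h1 ha2 ha3 hg1
  have hT4 : covRV P (P[x2|G]) (condCovRV G P x1 x3)
      = ∫ ω, ((P[x2|G]) ω - ∫ a, x2 a ∂P) * (x1 ω - (P[x1|G]) ω) * (x3 ω - (P[x3|G]) ω) ∂P :=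
    cov_term hG h2 ha1 ha3 hg2
  have hT5 : covRV P (P[x3|G]) (condCovRV G P x1 x2)
      = ∫ ω, ((P[x3|G]) ω - ∫ a, x3 a ∂P) * (x1 ω - (P[x1|G]) ω) * (x2 ω - (P[x2|G]) ω) ∂P :=
    cov_term hG h3 ha1 ha2 hg3
  have hL : cum3RV P x1 x2 x3
      = ∫ ω, (x1 ω - ∫ a, x1 a ∂P) * (x2 ω - ∫ a, x2 a ∂P) * (x3 ω - ∫ a, x3 a ∂P) ∂P := rfl
  linarith [hexp, hsum, hz6, hz7, hz8, hT1, hT2, hT3, hT4, hT5, hL]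
end

section
/- Under the DICA model, for an i.i.d. sample x_1,…,x_N with N ≥ 2, the estimator Ŝ := Ĉov(x,x) − diag(Ê(x)) is unbiased for S: E[Ŝ] = S = Σ_{k=1}^K Var(α_k) d_k d_kᵀ. -/
/-!
Conditionally on `α`, the counts are independent Poisson variables with means `y = Dα`, so
`E[x_i x_j | α] = y_i y_j + δ_ij y_i` and `E[x_i | α] = y_i`. The diagonal correction in `S`
removes exactly the Poisson noise, leaving `S = Cov(Dα, Dα) = ∑ₖ Var(α_k) d_k d_kᵀ` by
independence of the `α_k`. Unbiasedness of `Ŝ` is the unbiasedness of the sample covariance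
with Bessel's correction, together with `E[Ê(x)] = E(x)`.
-/

open MeasureTheory ProbabilityTheory

/-- The law of the word-count vector `x` in the DICA model with mutually independent
topic intensities `α_k ~ ν k` and, given `α`, independent coordinates
`x_m ~ Poisson([Dα]_m)`. -/
noncomputable def dicaMeasure (M K : ℕ) (D : Matrix (Fin M) (Fin K) ℝ)
    (ν : Fin K → Measure ℝ) [∀ k, SigmaFinite (ν k)] : Measure (Fin M → ℕ) :=
  (Measure.pi ν).bind
    (fun a => Measure.pi fun m : Fin M => poissonMeasure (∑ k, D m k * a k).toNNReal)

/-- The population matrix `S = Cov(x,x) − diag(E x)` of the DICA model. -/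
noncomputable def dicaS (M K : ℕ) (D : Matrix (Fin M) (Fin K) ℝ)
    (ν : Fin K → Measure ℝ) [∀ k, SigmaFinite (ν k)] : Matrix (Fin M) (Fin M) ℝ :=
  fun i j =>
    (∫ v, ((v i : ℝ) - ∫ w, (w i : ℝ) ∂dicaMeasure M K D ν)
        * ((v j : ℝ) - ∫ w, (w j : ℝ) ∂dicaMeasure M K D ν) ∂dicaMeasure M K D ν)
      - (if i = j then ∫ v, (v i : ℝ) ∂dicaMeasure M K D ν else 0)

/-- The sample mean `Ê(x) = (1/N) ∑ₙ xₙ` of a sample `ξ`. -/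
noncomputable def sampleMean (M N : ℕ) (ξ : Fin N → Fin M → ℕ) (i : Fin M) : ℝ :=
  (1 / (N : ℝ)) * ∑ n, (ξ n i : ℝ)

/-- The estimator `Ŝ = Ĉov(x,x) − diag(Ê(x))` built from a sample `ξ`. -/
noncomputable def hatS (M N : ℕ) (ξ : Fin N → Fin M → ℕ) : Matrix (Fin M) (Fin M) ℝ :=
  fun i j =>
    (1 / ((N : ℝ) - 1)) *
        ∑ n, ((ξ n i : ℝ) - sampleMean M N ξ i) * ((ξ n j : ℝ) - sampleMean M N ξ j)
      - (if i = j then sampleMean M N ξ i else 0)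

open Real
open scoped NNReal ENNReal Nat Matrix

section Poisson

variable (r : ℝ≥0)

lemma poisson_weight_succ_mul (n : ℕ) :
    exp (-r) * r ^ (n + 1) / (n + 1)! * (n + 1 : ℕ) = r * (exp (-r) * r ^ n / n !) := by
  rw [Nat.factorial_succ]
  push_cast
  field_simp
  ring

lemma hasSum_poisson_weight_mul_natCast : HasSum (fun n : ℕ => exp (-r) * r ^ n / n ! * n) r := by
  refine (hasSum_nat_add_iff' 1).mp ?_
  simp only [Finset.range_one, Finset.sum_singleton, CharP.cast_eq_zero, mul_zero, sub_zero,
    poisson_weight_succ_mul]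
  simpa using (hasSum_one_poissonMeasure r).mul_left (r : ℝ)

lemma hasSum_poisson_weight_mul_natCast_sq :
    HasSum (fun n : ℕ => exp (-r) * r ^ n / n ! * (n : ℝ) ^ 2) (r ^ 2 + r) := by
  refine (hasSum_nat_add_iff' 1).mp ?_
  have hshift : ∀ n : ℕ, exp (-r) * r ^ (n + 1) / (n + 1)! * ((n + 1 : ℕ) : ℝ) ^ 2
      = r * (exp (-r) * r ^ n / n ! * n + exp (-r) * r ^ n / n !) := fun n => by
    rw [pow_two, ← mul_assoc, poisson_weight_succ_mul]
    push_cast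
    ring
  simp only [Finset.range_one, Finset.sum_singleton, CharP.cast_eq_zero, ne_eq,
    OfNat.ofNat_ne_zero, not_false_eq_true, zero_pow, mul_zero, sub_zero, hshift]
  have h :=
    ((hasSum_poisson_weight_mul_natCast r).add (hasSum_one_poissonMeasure r)).mul_left (r : ℝ)
  rwa [mul_add_one, ← pow_two] at h

lemma integrable_poissonMeasure_of_hasSum {f : ℕ → ℝ} (hf : 0 ≤ f) {s : ℝ}
    (h : HasSum (fun n => exp (-r) * r ^ n / n ! * f n) s) : Integrable f Po(r) := by
  rw [integrable_poissonMeasure_iff]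
  simpa [Real.norm_of_nonneg (hf _)] using h.summable

lemma integral_poissonMeasure_of_hasSum {f : ℕ → ℝ} {s : ℝ}
    (h : HasSum (fun n => exp (-r) * r ^ n / n ! * f n) s) : ∫ n, f n ∂Po(r) = s := by
  rw [integral_poissonMeasure]
  exact h.tsum_eq

lemma integrable_natCast_poissonMeasure : Integrable (fun n : ℕ => (n : ℝ)) Po(r) :=
  integrable_poissonMeasure_of_hasSum r (fun n => by positivity)
    (hasSum_poisson_weight_mul_natCast r)

lemma integral_natCast_poissonMeasure : ∫ n, (n : ℝ) ∂Po(r) = r :=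
  integral_poissonMeasure_of_hasSum r (hasSum_poisson_weight_mul_natCast r)

lemma integrable_natCast_sq_poissonMeasure : Integrable (fun n : ℕ => (n : ℝ) ^ 2) Po(r) :=
  integrable_poissonMeasure_of_hasSum r (fun n => by positivity)
    (hasSum_poisson_weight_mul_natCast_sq r)

lemma integral_natCast_sq_poissonMeasure : ∫ n, (n : ℝ) ^ 2 ∂Po(r) = r ^ 2 + r :=
  integral_poissonMeasure_of_hasSum r (hasSum_poisson_weight_mul_natCast_sq r)

end Poisson

lemma measurable_poissonMeasure : Measurable poissonMeasure := by
  refine Measure.measurable_of_measurable_coe _ fun s hs => ?_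
  simp_rw [poissonMeasure, Measure.sum_apply _ hs, Measure.smul_apply, smul_eq_mul]
  exact Measurable.tsum fun n => by fun_prop

lemma Measurable.measure_pi {α ι : Type*} [MeasurableSpace α] [Fintype ι] {β : ι → Type*}
    [∀ i, MeasurableSpace (β i)] {κ : ∀ i, α → Measure (β i)} (hκ : ∀ i, Measurable (κ i))
    [∀ i a, IsProbabilityMeasure (κ i a)] : Measurable fun a => Measure.pi fun i => κ i a := by
  refine .measure_of_isPiSystem_of_isProbabilityMeasure generateFrom_pi.symm isPiSystem_pi ?_
  rintro _ ⟨s, hs, rfl⟩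
  simp_rw [Measure.pi_pi]
  exact Finset.measurable_prod _ fun i _ => (Measure.measurable_coe (hs i (Set.mem_univ i))).comp (hκ i)

section Pi

variable {ι β : Type*} [Fintype ι] [MeasurableSpace β] {μ : ι → Measure β}
  [∀ i, IsProbabilityMeasure (μ i)] {i j : ι} {f g : β → ℝ}

lemma indepFun_eval_pi (hij : i ≠ j) :
    IndepFun (fun x : ι → β => x i) (fun x => x j) (Measure.pi μ) :=
  (iIndepFun_pi (X := fun _ => id) fun _ => aemeasurable_id).indepFun hij

lemma integrable_comp_eval_mul_comp_eval (hij : i ≠ j) (hf : Integrable f (μ i))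
    (hg : Integrable g (μ j)) :
    Integrable (fun x : ι → β => f (x i) * g (x j)) (Measure.pi μ) := by
  have hind : IndepFun (fun x : ι → β => f (x i)) (fun x => g (x j)) (Measure.pi μ) :=
    (indepFun_eval_pi hij).comp₀
    (measurable_pi_apply i).aemeasurable (measurable_pi_apply j).aemeasurable
    (by rw [(measurePreserving_eval μ i).map_eq]; exact hf.1.aemeasurable)
    (by rw [(measurePreserving_eval μ j).map_eq]; exact hg.1.aemeasurable)
  exact hind.integrable_mul (integrable_comp_eval hf) (integrable_comp_eval hg)

lemma integral_comp_eval_mul_comp_eval (hij : i ≠ j) (hf : AEStronglyMeasurable f (μ i))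
    (hg : AEStronglyMeasurable g (μ j)) :
    ∫ x : ι → β, f (x i) * g (x j) ∂Measure.pi μ = (∫ t, f t ∂μ i) * ∫ t, g t ∂μ j := by
  rw [(indepFun_eval_pi hij).integral_fun_comp_mul_comp (measurable_pi_apply i).aemeasurable
    (measurable_pi_apply j).aemeasurable (by rwa [(measurePreserving_eval μ i).map_eq])
    (by rwa [(measurePreserving_eval μ j).map_eq]), integral_comp_eval hf, integral_comp_eval hg]

end Pi

section CovariancePi

variable {ι κ : Type*} [Fintype ι] {μ : ι → Measure ℝ} [∀ i, IsProbabilityMeasure (μ i)]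

lemma covariance_eval_pi [DecidableEq ι] (hμ : ∀ i, MemLp (fun t : ℝ => t) 2 (μ i)) (i j : ι) :
    cov[fun x : ι → ℝ => x i, fun x => x j; Measure.pi μ]
      = if i = j then Var[fun t : ℝ => t; μ i] else 0 := by
  split_ifs with hij
  · subst hij
    rw [covariance_self (measurable_pi_apply i).aemeasurable, ← (measurePreserving_eval μ i).map_eq,
      variance_map (X := fun t : ℝ => t) measurable_id'.aemeasurable
      (measurable_pi_apply i).aemeasurable]
    rfl
  · exact (indepFun_eval_pi hij).covariance_eq_zero
      ((hμ i).comp_measurePreserving (measurePreserving_eval μ i))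
      ((hμ j).comp_measurePreserving (measurePreserving_eval μ j))

lemma covariance_mulVec_pi (hμ : ∀ i, MemLp (fun t : ℝ => t) 2 (μ i)) (A : Matrix κ ι ℝ)
    (k l : κ) :
    cov[fun x => (A *ᵥ x) k, fun x => (A *ᵥ x) l; Measure.pi μ]
      = ∑ i, Var[fun t : ℝ => t; μ i] * A k i * A l i := by
  classical
  have hcoord : ∀ i, MemLp (fun x : ι → ℝ => x i) 2 (Measure.pi μ) := fun i =>
    (hμ i).comp_measurePreserving (measurePreserving_eval μ i)
  change cov[fun x => ∑ i, A k i * x i, fun x => ∑ j, A l j * x j; Measure.pi μ] = _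
  refine (covariance_fun_sum_fun_sum (X := fun i (x : ι → ℝ) => A k i * x i)
    (Y := fun j (x : ι → ℝ) => A l j * x j)
    (fun i => (hcoord i).const_mul _) (fun j => (hcoord j).const_mul _)).trans ?_
  simp_rw [covariance_const_mul_left, covariance_const_mul_right, covariance_eval_pi hμ,
    mul_ite, mul_zero, Finset.sum_ite_eq, Finset.mem_univ, if_true]
  exact Finset.sum_congr rfl fun i _ => by ring

end CovariancePi

section PoissonPi

variable {ι : Type*} [Fintype ι] (r : ι → ℝ≥0)

lemma integral_natCast_pi_poissonMeasure (i : ι) :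
    ∫ v, (v i : ℝ) ∂Measure.pi (fun m => Po(r m)) = r i := by
  rw [integral_comp_eval (μ := fun m => Po(r m)) (f := fun n : ℕ => (n : ℝ)) .of_discrete,
    integral_natCast_poissonMeasure]

lemma integrable_natCast_mul_natCast_pi_poissonMeasure (i j : ι) :
    Integrable (fun v : ι → ℕ => (v i : ℝ) * v j) (Measure.pi fun m => Po(r m)) := by
  by_cases hij : i = j
  · subst hij
    simp_rw [← sq]
    exact integrable_comp_eval (μ := fun m => Po(r m)) (f := fun n : ℕ => (n : ℝ) ^ 2)
      (integrable_natCast_sq_poissonMeasure _)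
  · exact integrable_comp_eval_mul_comp_eval hij (integrable_natCast_poissonMeasure _)
      (integrable_natCast_poissonMeasure _)

lemma integral_natCast_mul_natCast_pi_poissonMeasure [DecidableEq ι] (i j : ι) :
    ∫ v, (v i : ℝ) * v j ∂Measure.pi (fun m => Po(r m))
      = r i * r j + if i = j then (r i : ℝ) else 0 := by
  by_cases hij : i = j
  · subst hij
    rw [if_pos rfl]
    simp_rw [← sq]
    rw [integral_comp_eval (μ := fun m => Po(r m)) (f := fun n : ℕ => (n : ℝ) ^ 2) .of_discrete,
      integral_natCast_sq_poissonMeasure]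
  · rw [integral_comp_eval_mul_comp_eval (μ := fun m => Po(r m)) hij .of_discrete .of_discrete,
      integral_natCast_poissonMeasure, integral_natCast_poissonMeasure, if_neg hij, add_zero]

end PoissonPi

namespace MeasureTheory.Measure

variable {α β : Type*} [MeasurableSpace α] [MeasurableSpace β] {κ : Kernel α β} {μ : Measure α}
  {f : β → ℝ}

lemma integrable_comp_of_nonneg (hf : AEStronglyMeasurable f (κ ∘ₘ μ)) (h0 : 0 ≤ f)
    (hκ : ∀ᵐ a ∂μ, Integrable f (κ a)) (hint : Integrable (fun a => ∫ y, f y ∂κ a) μ) :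
    Integrable f (κ ∘ₘ μ) :=
  (Measure.integrable_comp_iff hf).2 ⟨hκ, by simpa only [Real.norm_of_nonneg (h0 _)] using hint⟩

lemma integral_comp (hf : Integrable f (κ ∘ₘ μ)) :
    ∫ y, f y ∂(κ ∘ₘ μ) = ∫ a, ∫ y, f y ∂κ a ∂μ := by
  rw [comp_eq_comp_const_apply] at hf ⊢
  rw [Kernel.integral_comp hf]
  rfl

end MeasureTheory.Measure

section Dica

variable {M K : ℕ} (D : Matrix (Fin M) (Fin K) ℝ)

noncomputable def dicaKernel : Kernel (Fin K → ℝ) (Fin M → ℕ) where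
  toFun a := Measure.pi fun m => Po(((D *ᵥ a) m).toNNReal)
  measurable' := Measurable.measure_pi fun m => measurable_poissonMeasure.comp (by fun_prop)

instance : IsMarkovKernel (dicaKernel D) :=
  ⟨fun a => by change IsProbabilityMeasure (Measure.pi _); infer_instance⟩

variable (ν : Fin K → Measure ℝ) [∀ k, IsProbabilityMeasure (ν k)]

lemma dicaMeasure_eq_comp : dicaMeasure M K D ν = dicaKernel D ∘ₘ Measure.pi ν := rfl

instance : IsProbabilityMeasure (dicaMeasure M K D ν) := by
  rw [dicaMeasure_eq_comp]; infer_instance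

variable {ν}

lemma memLp_mulVec_pi (hν2 : ∀ k, MemLp (fun t : ℝ => t) 2 (ν k)) (m : Fin M) :
    MemLp (fun a => (D *ᵥ a) m) 2 (Measure.pi ν) :=
  memLp_finsetSum (f := fun k (a : Fin K → ℝ) => D m k * a k) Finset.univ fun k _ =>
    ((hν2 k).comp_measurePreserving (measurePreserving_eval ν k)).const_mul (D m k)

lemma ae_coe_toNNReal_mulVec (hD : ∀ m k, 0 ≤ D m k) (hν : ∀ k, ∀ᵐ t ∂ν k, 0 ≤ t) :
    ∀ᵐ a ∂Measure.pi ν, ∀ m, (((D *ᵥ a) m).toNNReal : ℝ) = (D *ᵥ a) m := by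
  have ha : ∀ᵐ a ∂Measure.pi ν, ∀ k, 0 ≤ a k :=
    ae_all_iff.2 fun k => (measurePreserving_eval ν k).quasiMeasurePreserving.ae (hν k)
  filter_upwards [ha] with a ha m
  exact Real.coe_toNNReal _ (Finset.sum_nonneg fun k _ => mul_nonneg (hD m k) (ha k) :
    0 ≤ ∑ k, D m k * a k)

lemma integral_dicaKernel_ae_eq (hD : ∀ m k, 0 ≤ D m k) (hν : ∀ k, ∀ᵐ t ∂ν k, 0 ≤ t) (i : Fin M) :
    (fun a => ∫ v, (v i : ℝ) ∂dicaKernel D a) =ᵐ[Measure.pi ν] fun a => (D *ᵥ a) i := by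
  filter_upwards [ae_coe_toNNReal_mulVec D hD hν] with a ha
  rw [← ha i]
  exact integral_natCast_pi_poissonMeasure _ i

lemma integral_mul_dicaKernel_ae_eq (hD : ∀ m k, 0 ≤ D m k) (hν : ∀ k, ∀ᵐ t ∂ν k, 0 ≤ t)
    (i j : Fin M) :
    (fun a => ∫ v, (v i : ℝ) * v j ∂dicaKernel D a) =ᵐ[Measure.pi ν]
      fun a => (D *ᵥ a) i * (D *ᵥ a) j + if i = j then (D *ᵥ a) i else 0 := by
  filter_upwards [ae_coe_toNNReal_mulVec D hD hν] with a ha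
  rw [← ha i, ← ha j]
  exact integral_natCast_mul_natCast_pi_poissonMeasure _ i j

lemma integrable_mul_dicaMeasure (hD : ∀ m k, 0 ≤ D m k) (hν : ∀ k, ∀ᵐ t ∂ν k, 0 ≤ t)
    (hν2 : ∀ k, MemLp (fun t : ℝ => t) 2 (ν k)) (i j : Fin M) :
    Integrable (fun v : Fin M → ℕ => (v i : ℝ) * v j) (dicaMeasure M K D ν) := by
  rw [dicaMeasure_eq_comp]
  refine Measure.integrable_comp_of_nonneg .of_discrete (fun v => by positivity)
    (ae_of_all _ fun a => integrable_natCast_mul_natCast_pi_poissonMeasure _ i j)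
    (Integrable.congr ?_ (integral_mul_dicaKernel_ae_eq D hD hν i j).symm)
  refine ((memLp_mulVec_pi D hν2 i).integrable_mul (memLp_mulVec_pi D hν2 j)).add ?_
  split_ifs
  · exact (memLp_mulVec_pi D hν2 i).integrable one_le_two
  · exact integrable_zero _ _ _

lemma memLp_dicaMeasure (hD : ∀ m k, 0 ≤ D m k) (hν : ∀ k, ∀ᵐ t ∂ν k, 0 ≤ t)
    (hν2 : ∀ k, MemLp (fun t : ℝ => t) 2 (ν k)) (i : Fin M) :
    MemLp (fun v : Fin M → ℕ => (v i : ℝ)) 2 (dicaMeasure M K D ν) :=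
  (memLp_two_iff_integrable_sq .of_discrete).2 <| by
    simpa only [sq] using integrable_mul_dicaMeasure D hD hν hν2 i i

lemma integral_dicaMeasure (hD : ∀ m k, 0 ≤ D m k) (hν : ∀ k, ∀ᵐ t ∂ν k, 0 ≤ t)
    (hν2 : ∀ k, MemLp (fun t : ℝ => t) 2 (ν k)) (i : Fin M) :
    ∫ v, (v i : ℝ) ∂dicaMeasure M K D ν = ∫ a, (D *ᵥ a) i ∂Measure.pi ν := by
  have hint := (memLp_dicaMeasure D hD hν hν2 i).integrable one_le_two
  rw [dicaMeasure_eq_comp] at hint ⊢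
  rw [Measure.integral_comp hint, integral_congr_ae (integral_dicaKernel_ae_eq D hD hν i)]

lemma integral_mul_dicaMeasure (hD : ∀ m k, 0 ≤ D m k) (hν : ∀ k, ∀ᵐ t ∂ν k, 0 ≤ t)
    (hν2 : ∀ k, MemLp (fun t : ℝ => t) 2 (ν k)) (i j : Fin M) :
    ∫ v, (v i : ℝ) * v j ∂dicaMeasure M K D ν
      = ∫ a, (D *ᵥ a) i * (D *ᵥ a) j ∂Measure.pi ν
        + if i = j then ∫ a, (D *ᵥ a) i ∂Measure.pi ν else 0 := by
  have hint := integrable_mul_dicaMeasure D hD hν hν2 i j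
  have hprod : Integrable (fun a => (D *ᵥ a) i * (D *ᵥ a) j) (Measure.pi ν) :=
    (memLp_mulVec_pi D hν2 i).integrable_mul (memLp_mulVec_pi D hν2 j)
  rw [dicaMeasure_eq_comp] at hint ⊢
  rw [Measure.integral_comp hint, integral_congr_ae (integral_mul_dicaKernel_ae_eq D hD hν i j)]
  split_ifs
  · exact integral_add hprod ((memLp_mulVec_pi D hν2 i).integrable one_le_two)
  · simp

lemma dicaS_eq_covariance_mulVec (hD : ∀ m k, 0 ≤ D m k) (hν : ∀ k, ∀ᵐ t ∂ν k, 0 ≤ t)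
    (hν2 : ∀ k, MemLp (fun t : ℝ => t) 2 (ν k)) (i j : Fin M) :
    dicaS M K D ν i j = cov[fun a => (D *ᵥ a) i, fun a => (D *ᵥ a) j; Measure.pi ν] := by
  change cov[fun v : Fin M → ℕ => (v i : ℝ), fun v => (v j : ℝ); dicaMeasure M K D ν]
    - (if i = j then ∫ v, (v i : ℝ) ∂dicaMeasure M K D ν else 0) = _
  rw [covariance_eq_sub (memLp_dicaMeasure D hD hν hν2 i) (memLp_dicaMeasure D hD hν hν2 j),
    covariance_eq_sub (memLp_mulVec_pi D hν2 i) (memLp_mulVec_pi D hν2 j)]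
  simp only [Pi.mul_apply]
  rw [integral_mul_dicaMeasure D hD hν hν2, integral_dicaMeasure D hD hν hν2,
    integral_dicaMeasure D hD hν hν2]
  split_ifs <;> ring

end Dica

lemma ProbabilityTheory.HasLaw.memLp_comp {Ω E F : Type*} [MeasurableSpace Ω] [MeasurableSpace E]
    [NormedAddCommGroup F] {P : Measure Ω} {μ : Measure E} {X : Ω → E} (hX : HasLaw X μ P)
    {f : E → F} {p : ℝ≥0∞} (hf : MemLp f p μ) : MemLp (fun ω => f (X ω)) p P := by
  rw [← hX.map_eq] at hf
  exact (memLp_map_measure_iff hf.1 hX.aemeasurable).1 hf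

lemma ProbabilityTheory.HasLaw.integrable_comp {Ω E F : Type*} [MeasurableSpace Ω]
    [MeasurableSpace E] [NormedAddCommGroup F] {P : Measure Ω} {μ : Measure E} {X : Ω → E}
    (hX : HasLaw X μ P) {f : E → F} (hf : Integrable f μ) : Integrable (fun ω => f (X ω)) P :=
  memLp_one_iff_integrable.1 (hX.memLp_comp (memLp_one_iff_integrable.2 hf))

noncomputable def sampleCov {N : ℕ} (X Y : Fin N → ℝ) : ℝ :=
  (1 / ((N : ℝ) - 1)) *
    ∑ n, (X n - (1 / (N : ℝ)) * ∑ m, X m) * (Y n - (1 / (N : ℝ)) * ∑ m, Y m)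

lemma sum_sub_mean_mul_sub_mean {N : ℕ} (hN : N ≠ 0) (X Y : Fin N → ℝ) :
    ∑ n, (X n - (1 / (N : ℝ)) * ∑ m, X m) * (Y n - (1 / (N : ℝ)) * ∑ m, Y m)
      = ∑ n, X n * Y n - (1 / (N : ℝ)) * ∑ n, ∑ q, X n * Y q := by
  simp only [sub_mul, mul_sub, Finset.sum_sub_distrib, ← Finset.mul_sum, ← Finset.sum_mul,
    Finset.sum_const, Finset.card_univ, Fintype.card_fin, nsmul_eq_mul]
  field_simp
  ring

section Sample

variable {Ω E : Type*} [MeasurableSpace Ω] [MeasurableSpace E] {P : Measure Ω} {μ : Measure E}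
  {N : ℕ} {x : Fin N → Ω → E} {f g : E → ℝ}

lemma integral_comp_mul_comp_of_iIndepFun [IsProbabilityMeasure P] (hx : ∀ n, HasLaw (x n) μ P)
    (hiid : iIndepFun x P) (hf : MemLp f 2 μ) (hg : MemLp g 2 μ) (n q : Fin N) :
    ∫ ω, f (x n ω) * g (x q ω) ∂P
      = (if n = q then cov[f, g; μ] else 0) + (∫ y, f y ∂μ) * ∫ y, g y ∂μ := by
  have : IsProbabilityMeasure μ := (hx n).isProbabilityMeasure_iff.1 ‹_›
  split_ifs with hnq
  · subst hnq
    rw [covariance_eq_sub hf hg, sub_add_cancel]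
    exact (hx n).integral_comp (hf.1.mul hg.1)
  · rw [(hiid.indepFun hnq).integral_fun_comp_mul_comp (hx n).aemeasurable (hx q).aemeasurable
      ((hx n).map_eq ▸ hf.1) ((hx q).map_eq ▸ hg.1), zero_add]
    exact congr_arg₂ (· * ·) ((hx n).integral_comp hf.1) ((hx q).integral_comp hg.1)

lemma integrable_sampleCov (hN : N ≠ 0) (hx : ∀ n, HasLaw (x n) μ P) (hf : MemLp f 2 μ)
    (hg : MemLp g 2 μ) :
    Integrable (fun ω => sampleCov (fun n => f (x n ω)) (fun n => g (x n ω))) P := by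
  have hprod : ∀ n q, Integrable (fun ω => f (x n ω) * g (x q ω)) P := fun n q =>
    ((hx n).memLp_comp hf).integrable_mul ((hx q).memLp_comp hg)
  simp_rw [sampleCov, sum_sub_mean_mul_sub_mean hN]
  refine ((integrable_finsetSum _ fun n _ => hprod n n).sub
    ((integrable_finsetSum _ fun n _ => integrable_finsetSum _ fun q _ => hprod n q).const_mul
      _)).const_mul _

lemma integral_sampleCov [IsProbabilityMeasure P] (hN : 2 ≤ N) (hx : ∀ n, HasLaw (x n) μ P)
    (hiid : iIndepFun x P) (hf : MemLp f 2 μ) (hg : MemLp g 2 μ) :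
    ∫ ω, sampleCov (fun n => f (x n ω)) (fun n => g (x n ω)) ∂P = cov[f, g; μ] := by
  have hprod : ∀ n q, Integrable (fun ω => f (x n ω) * g (x q ω)) P := fun n q =>
    ((hx n).memLp_comp hf).integrable_mul ((hx q).memLp_comp hg)
  have hdouble : ∫ ω, ∑ n, ∑ q, f (x n ω) * g (x q ω) ∂P
      = ∑ n, ∑ q, ∫ ω, f (x n ω) * g (x q ω) ∂P := by
    rw [integral_finsetSum _ fun n _ => integrable_finsetSum _ fun q _ => hprod n q]
    exact Finset.sum_congr rfl fun n _ => integral_finsetSum _ fun q _ => hprod n q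
  have hN1 : (N : ℝ) - 1 ≠ 0 := by
    rw [sub_ne_zero]; exact_mod_cast (by omega : N ≠ 1)
  simp_rw [sampleCov, sum_sub_mean_mul_sub_mean (by omega : N ≠ 0)]
  rw [integral_const_mul, integral_sub (integrable_finsetSum _ fun n _ => hprod n n)
    ((integrable_finsetSum _ fun n _ => integrable_finsetSum _ fun q _ => hprod n q).const_mul
      _), integral_const_mul, integral_finsetSum _ fun n _ => hprod n n, hdouble]
  simp_rw [integral_comp_mul_comp_of_iIndepFun hx hiid hf hg]
  simp only [↓reduceIte, Finset.sum_add_distrib, Finset.sum_ite_eq, Finset.mem_univ,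
    Finset.sum_const, Finset.card_univ, Fintype.card_fin, nsmul_eq_mul]
  field_simp
  ring

lemma integral_sampleMean (hN : N ≠ 0) (hx : ∀ n, HasLaw (x n) μ P) (hf : Integrable f μ) :
    ∫ ω, (1 / (N : ℝ)) * ∑ n, f (x n ω) ∂P = ∫ y, f y ∂μ := by
  have hmean : ∀ n, ∫ ω, f (x n ω) ∂P = ∫ y, f y ∂μ := fun n => (hx n).integral_comp hf.1
  rw [integral_const_mul, integral_finsetSum _ fun n _ => (hx n).integrable_comp hf]
  simp only [hmean, Finset.sum_const, Finset.card_univ, Fintype.card_fin, nsmul_eq_mul]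
  field_simp

end Sample

lemma integral_hatS {Ω : Type*} [MeasurableSpace Ω] {P : Measure Ω} [IsProbabilityMeasure P]
    {M N : ℕ} (hN : 2 ≤ N) {μ : Measure (Fin M → ℕ)} {x : Fin N → Ω → Fin M → ℕ}
    (hx : ∀ n, HasLaw (x n) μ P) (hiid : iIndepFun x P)
    (hμ : ∀ m, MemLp (fun v : Fin M → ℕ => (v m : ℝ)) 2 μ) (i j : Fin M) :
    ∫ ω, hatS M N (fun n => x n ω) i j ∂P
      = cov[fun v => (v i : ℝ), fun v => (v j : ℝ); μ]
        - if i = j then ∫ v, (v i : ℝ) ∂μ else 0 := by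
  have : IsProbabilityMeasure μ := (hx ⟨0, by omega⟩).isProbabilityMeasure_iff.1 ‹_›
  have hcov := integral_sampleCov hN hx hiid (hμ i) (hμ j)
  change ∫ ω, sampleCov (fun n => (x n ω i : ℝ)) (fun n => (x n ω j : ℝ))
    - (if i = j then (1 / (N : ℝ)) * ∑ n, (x n ω i : ℝ) else 0) ∂P = _
  split_ifs
  · rw [integral_sub (integrable_sampleCov (by omega) hx (hμ i) (hμ j)) ?_, hcov,
      integral_sampleMean (by omega) hx ((hμ i).integrable one_le_two)]
    exact (integrable_finsetSum _ fun n _ =>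
      (hx n).integrable_comp ((hμ i).integrable one_le_two)).const_mul _
  · simpa using hcov

theorem dica_hatS_unbiased_general
    {Ω : Type*} [MeasurableSpace Ω] (P : Measure Ω) [IsProbabilityMeasure P]
    (M K N : ℕ) (hN : 2 ≤ N)
    (D : Matrix (Fin M) (Fin K) ℝ)
    (hDnonneg : ∀ m k, 0 ≤ D m k)
    (ν : Fin K → Measure ℝ) [∀ k, IsProbabilityMeasure (ν k)]
    (hνnonneg : ∀ k, ∀ᵐ t ∂(ν k), 0 ≤ t)
    (hν2 : ∀ k, MemLp (fun t : ℝ => t) 2 (ν k))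
    (x : Fin N → Ω → Fin M → ℕ) (hx : ∀ n, Measurable (x n))
    (hiid : iIndepFun x P)
    (hlaw : ∀ n, P.map (x n) = dicaMeasure M K D ν) :
    ∀ i j : Fin M,
      (∫ ω, hatS M N (fun n => x n ω) i j ∂P) = dicaS M K D ν i j ∧
      dicaS M K D ν i j = ∑ k, variance (fun t : ℝ => t) (ν k) * D i k * D j k := by
  intro i j
  exact ⟨integral_hatS hN (fun n => ⟨(hx n).aemeasurable, hlaw n⟩) hiid
      (memLp_dicaMeasure D hDnonneg hνnonneg hν2) i j,
    (dicaS_eq_covariance_mulVec D hDnonneg hνnonneg hν2 i j).trans (covariance_mulVec_pi hν2 D i j)⟩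

/-- Under the DICA model, for an i.i.d. sample of size `N ≥ 2`, the
estimator `Ŝ := Ĉov(x,x) − diag(Ê(x))` is unbiased for `S`:
`E[Ŝ] = S = ∑ₖ Var(α_k) d_k d_kᵀ`. -/
theorem dica_hatS_unbiased
    {Ω : Type*} [MeasurableSpace Ω] (P : Measure Ω) [IsProbabilityMeasure P]
    (M K N : ℕ) (hM : 1 ≤ M) (hK : 1 ≤ K) (hN : 2 ≤ N)
    (D : Matrix (Fin M) (Fin K) ℝ)
    (hDnonneg : ∀ m k, 0 ≤ D m k) (hDsum : ∀ k, ∑ m, D m k = 1)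
    (ν : Fin K → Measure ℝ) [∀ k, IsProbabilityMeasure (ν k)]
    (hνnonneg : ∀ k, ∀ᵐ t ∂(ν k), 0 ≤ t)
    (hν2 : ∀ k, MemLp (fun t : ℝ => t) 2 (ν k))
    (x : Fin N → Ω → Fin M → ℕ) (hx : ∀ n, Measurable (x n))
    (hiid : iIndepFun x P)
    (hlaw : ∀ n, P.map (x n) = dicaMeasure M K D ν) :
    ∀ i j : Fin M,
      (∫ ω, hatS M N (fun n => x n ω) i j ∂P) = dicaS M K D ν i j ∧
      dicaS M K D ν i j = ∑ k, variance (fun t : ℝ => t) (ν k) * D i k * D j k :=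
  dica_hatS_unbiased_general P M K N hN D hDnonneg ν hνnonneg hν2 x hx hiid hlaw
end
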